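/- arXiv:math/0305337 — 10 statements merged into one kernel-verified Lean document; each statement's English description precedes it below -/
import Mathlib

section
/- A Σ-family α on a set X satisfies conditions (1a), (1b) and (2) if and only if it satisfies the third arrow property. -/
/-- A `Σ`-family on a set `X`, for a subset `S = Σ` of an abelian group `G` with
`Σ + Σ ⊆ Σ` and `0 ∈ Σ`: a family of bijections `α_t : X_{-t} → X_t` (`t ∈ Σ`) between
subsets of `X`, encoded by domain sets `D : G → Set X` together with total maps
`act t : X → X` (whose values outside `D (-t)` are irrelevant), such that `X_0 = X`
and `α_0 = id_X`. -/
structure SigmaFamily (G : Type*) [AddCommGroup G] (S : Set G) (X : Type*) where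
  D : G → Set X
  act : G → X → X
  mapsTo : ∀ t ∈ S, Set.MapsTo (act t) (D (-t)) (D t)
  injOn : ∀ t ∈ S, Set.InjOn (act t) (D (-t))
  surjOn : ∀ t ∈ S, Set.SurjOn (act t) (D (-t)) (D t)
  D_zero : D 0 = Set.univ
  act_zero : ∀ x, act 0 x = x

namespace SigmaFamily

variable {G : Type*} [AddCommGroup G] {S : Set G} {X : Type*}

/-- Statement (I) (resp. (II), (III)) of the third arrow property:
`x ∈ X_{-t}` and `y = α_t x`. -/
def ArrowI (F : SigmaFamily G S X) (t : G) (x y : X) : Prop :=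
  x ∈ F.D (-t) ∧ y = F.act t x

/-- The third arrow property: any two of (I), (II), (III) imply the third. -/
def ThirdArrow (F : SigmaFamily G S X) : Prop :=
  ∀ s ∈ S, ∀ t ∈ S, ∀ x y z : X,
    (F.ArrowI t x y → F.ArrowI s y z → F.ArrowI (s + t) x z) ∧
    (F.ArrowI t x y → F.ArrowI (s + t) x z → F.ArrowI s y z) ∧
    (F.ArrowI s y z → F.ArrowI (s + t) x z → F.ArrowI t x y)

/-- Condition (1a): `α_s(X_{-s} ∩ X_t) = X_s ∩ X_{s+t}`. -/
def Cond1a (F : SigmaFamily G S X) : Prop :=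
  ∀ s ∈ S, ∀ t ∈ S, F.act s '' (F.D (-s) ∩ F.D t) = F.D s ∩ F.D (s + t)

/-- Condition (1b): `α_t(X_{-t} ∩ X_{-s-t}) = X_t ∩ X_{-s}`. -/
def Cond1b (F : SigmaFamily G S X) : Prop :=
  ∀ s ∈ S, ∀ t ∈ S, F.act t '' (F.D (-t) ∩ F.D (-(s + t))) = F.D t ∩ F.D (-s)

/-- Condition (1′): `α_s(X_{-s} ∩ X_t) ⊆ X_{s+t}`. -/
def Cond1' (F : SigmaFamily G S X) : Prop :=
  ∀ s ∈ S, ∀ t ∈ S, F.act s '' (F.D (-s) ∩ F.D t) ⊆ F.D (s + t)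

/-- Condition (2): for `x ∈ X_{-t} ∩ X_{-s-t}`, `α_t x ∈ X_{-s}` and
`α_{s+t} x = α_s (α_t x)`. -/
def Cond2 (F : SigmaFamily G S X) : Prop :=
  ∀ s ∈ S, ∀ t ∈ S, ∀ x ∈ F.D (-t) ∩ F.D (-(s + t)),
    F.act t x ∈ F.D (-s) ∧ F.act (s + t) x = F.act s (F.act t x)

end SigmaFamily

/-- A `Σ`-family `α` on a set `X` satisfies conditions (1a), (1b) and (2)
if and only if it satisfies the third arrow property. -/
theorem conds_iff_thirdArrow {G : Type*} [AddCommGroup G] {S : Set G} {X : Type*}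
    (hS : ∀ a ∈ S, ∀ b ∈ S, a + b ∈ S) (h0 : (0 : G) ∈ S)
    (F : SigmaFamily G S X) :
    (F.Cond1a ∧ F.Cond1b ∧ F.Cond2) ↔ F.ThirdArrow := by
  constructor
  · rintro ⟨h1a, h1b, h2⟩ s hs t ht x y z
    have hst : s + t ∈ S := hS s hs t ht
    refine ⟨?_, ?_, ?_⟩
    · -- (I) & (II) ⇒ (III)
      rintro ⟨hx, rfl⟩ ⟨hy, rfl⟩
      have hy' : F.act t x ∈ F.D t ∩ F.D (-s) := ⟨F.mapsTo t ht hx, hy⟩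
      rw [← h1b s hs t ht] at hy'
      obtain ⟨x', hx', hxx⟩ := hy'
      have hxm : x ∈ F.D (-(s + t)) := F.injOn t ht hx'.1 hx hxx ▸ hx'.2
      exact ⟨hxm, (h2 s hs t ht x ⟨hx, hxm⟩).2.symm⟩
    · -- (I) & (III) ⇒ (II)
      rintro ⟨hx, rfl⟩ ⟨hx', rfl⟩
      obtain ⟨h₁, h₂⟩ := h2 s hs t ht x ⟨hx, hx'⟩
      exact ⟨h₁, h₂⟩
    · -- (II) & (III) ⇒ (I)
      rintro ⟨hy, rfl⟩ ⟨hx, hz⟩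
      have hz' : F.act s y ∈ F.D s ∩ F.D (s + t) := by
        rw [hz]
        exact ⟨hz ▸ F.mapsTo s hs hy, F.mapsTo (s + t) hst hx⟩
      rw [← h1a s hs t ht] at hz'
      obtain ⟨y', hy', hyy⟩ := hz'
      have hyD : y ∈ F.D t := F.injOn s hs hy'.1 hy hyy ▸ hy'.2
      have hyim : y ∈ F.act t '' (F.D (-t) ∩ F.D (-(s + t))) := by
        rw [h1b s hs t ht]; exact ⟨hyD, hy⟩
      obtain ⟨x'', hx'', hxy⟩ := hyim
      have heq : F.act (s + t) x'' = F.act (s + t) x := by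
        rw [(h2 s hs t ht x'' hx'').2, hxy]; exact hz
      have hxe : x'' = x := F.injOn (s + t) hst hx''.2 hx heq
      exact ⟨hxe ▸ hx''.1, (hxe ▸ hxy).symm⟩
  · intro hTA
    refine ⟨?_, ?_, ?_⟩
    · -- Cond1a
      intro s hs t ht
      have hst : s + t ∈ S := hS s hs t ht
      apply Set.Subset.antisymm
      · rintro _ ⟨y, ⟨hys, hyt⟩, rfl⟩
        refine ⟨F.mapsTo s hs hys, ?_⟩
        obtain ⟨x, hx, rfl⟩ := F.surjOn t ht hyt
        have := (hTA s hs t ht x (F.act t x) (F.act s (F.act t x))).1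
          ⟨hx, rfl⟩ ⟨hys, rfl⟩
        exact this.2 ▸ F.mapsTo (s + t) hst this.1
      · rintro z ⟨hzs, hzst⟩
        obtain ⟨y, hy, rfl⟩ := F.surjOn s hs hzs
        obtain ⟨x, hx, hxz⟩ := F.surjOn (s + t) hst hzst
        have := (hTA s hs t ht x y (F.act s y)).2.2 ⟨hy, rfl⟩ ⟨hx, hxz.symm⟩
        exact ⟨y, ⟨hy, this.2 ▸ F.mapsTo t ht this.1⟩, rfl⟩
    · -- Cond1b
      intro s hs t ht
      apply Set.Subset.antisymm
      · rintro _ ⟨x, ⟨hxt, hxst⟩, rfl⟩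
        refine ⟨F.mapsTo t ht hxt, ?_⟩
        exact ((hTA s hs t ht x (F.act t x) (F.act (s + t) x)).2.1
          ⟨hxt, rfl⟩ ⟨hxst, rfl⟩).1
      · rintro y ⟨hyt, hys⟩
        obtain ⟨x, hx, rfl⟩ := F.surjOn t ht hyt
        have := (hTA s hs t ht x (F.act t x) (F.act s (F.act t x))).1
          ⟨hx, rfl⟩ ⟨hys, rfl⟩
        exact ⟨x, ⟨hx, this.1⟩, rfl⟩
    · -- Cond2
      rintro s hs t ht x ⟨hxt, hxst⟩
      have := (hTA s hs t ht x (F.act t x) (F.act (s + t) x)).2.1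
        ⟨hxt, rfl⟩ ⟨hxst, rfl⟩
      exact ⟨this.1, this.2⟩
end

section
/- Let {α_g : X_{−g} → X_g : g ∈ G} be a partial action of an abelian group G on a set X (McClanahan's definition, i.e., conditions (1′), (2) and α_0 = id_X with X_0 = X). Then the family satisfies the full third arrow property with s,t ranging over all of G: for all s,t ∈ G and x,y,z ∈ X, any two of (I) x ∈ X_{−t} and y = α_t(x); (II) y ∈ X_{−s} and z = α_s(y); (III) x ∈ X_{−s−t} and z = α_{s+t}(x), imply the third. In particular, conditions (1a) α_s(X_{−s} ∩ X_t) = X_s ∩ X_{s+t} and (1b) α_t(X_{−t} ∩ X_{−s−t}) = X_t ∩ X_{−s} hold for all s,t ∈ G. -/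
section Aux

variable {G : Type*} [AddCommGroup G] {X : Type*}
variable (F : SigmaFamily G (Set.univ : Set G) X)

lemma aux_inv_act (h2 : F.Cond2) (t : G) {x : X} (hx : x ∈ F.D (-t)) :
    F.act (-t) (F.act t x) = x := by
  have h := h2 (-t) trivial t trivial x ⟨hx, by simp [F.D_zero]⟩
  have h' := h.2
  rw [neg_add_cancel, F.act_zero] at h'
  exact h'.symm

lemma aux_inv_act' (h2 : F.Cond2) (t : G) {y : X} (hy : y ∈ F.D t) :
    F.act t (F.act (-t) y) = y := by
  have := aux_inv_act F h2 (-t) (by simpa using hy)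
  simpa using this

lemma aux_mem (h1 : F.Cond1') {s t : G} {x : X} (hx : x ∈ F.D (-s)) (hx' : x ∈ F.D t) :
    F.act s x ∈ F.D (s + t) :=
  h1 s trivial t trivial ⟨x, ⟨hx, hx'⟩, rfl⟩

end Aux

/-- A partial action of an abelian group `G` on a set `X`
(McClanahan's definition: a family of bijections with `X_0 = X`, `α_0 = id_X`,
satisfying conditions (1′) and (2), here encoded as a `Σ`-family with `Σ = G`,
i.e. `S = Set.univ`, together with `Cond1'` and `Cond2`) satisfies the full third
arrow property with `s, t` ranging over all of `G`; in particular conditions (1a)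
and (1b) hold for all `s, t ∈ G`. -/
theorem groupPartialAction_thirdArrow {G : Type*} [AddCommGroup G] {X : Type*}
    (F : SigmaFamily G (Set.univ : Set G) X) (h1 : F.Cond1') (h2 : F.Cond2) :
    F.ThirdArrow ∧ F.Cond1a ∧ F.Cond1b := by
  refine ⟨?_, ?_, ?_⟩
  · -- ThirdArrow
    intro s _ t _ x y z
    refine ⟨?_, ?_, ?_⟩
    · rintro ⟨hx, rfl⟩ ⟨hy, rfl⟩
      have hyt : F.act t x ∈ F.D t := F.mapsTo t trivial hx
      have hmem : F.act (-t) (F.act t x) ∈ F.D (-t + -s) :=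
        aux_mem F h1 (by simpa using hyt) hy
      rw [aux_inv_act F h2 t hx] at hmem
      have e : -t + -s = -(s + t) := by abel
      rw [e] at hmem
      have h := h2 s trivial t trivial x ⟨hx, hmem⟩
      exact ⟨hmem, h.2.symm⟩
    · rintro ⟨hx, rfl⟩ ⟨hx', rfl⟩
      have h := h2 s trivial t trivial x ⟨hx, hx'⟩
      exact ⟨h.1, h.2⟩
    · rintro ⟨hy, rfl⟩ ⟨hx, hz⟩
      have hzs : F.act s y ∈ F.D s := F.mapsTo s trivial hy
      have hzst : F.act (s + t) x ∈ F.D (s + t) := F.mapsTo (s + t) trivial hx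
      rw [← hz] at hzst
      -- apply Cond2 with (g,h) := (-t, -s) to z := act s y = act (s+t) x
      have h := h2 (-t) trivial (-s) trivial (F.act s y)
        ⟨by simpa using hzs, by
          have e : -(-t + -s) = s + t := by abel
          rw [e]; exact hzst⟩
      have hYt : F.act (-s) (F.act s y) ∈ F.D (-(-t)) := h.1
      rw [aux_inv_act F h2 s hy] at hYt
      have hYt' : y ∈ F.D t := by simpa using hYt
      have h2' := h.2
      rw [aux_inv_act F h2 s hy] at h2'
      have e : -t + -s = -(s + t) := by abel
      rw [e] at h2'
      rw [hz] at h2'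
      have hzx : F.act (-(s + t)) (F.act (s + t) x) = x := aux_inv_act F h2 (s + t) hx
      rw [hzx] at h2'
      -- h2' : x = F.act (-t) y
      have hxt : x ∈ F.D (-t) := by
        rw [h2']; exact F.mapsTo (-t) trivial (by simpa using hYt')
      refine ⟨hxt, ?_⟩
      rw [h2', aux_inv_act' F h2 t hYt']
  · -- Cond1a
    intro s _ t _
    apply Set.Subset.antisymm
    · rintro _ ⟨x, ⟨hx, hx'⟩, rfl⟩
      exact ⟨F.mapsTo s trivial hx, aux_mem F h1 hx hx'⟩
    · rintro z ⟨hz, hz'⟩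
      refine ⟨F.act (-s) z, ⟨F.mapsTo (-s) trivial (by simpa using hz), ?_⟩,
        aux_inv_act' F h2 s hz⟩
      have := aux_mem F h1 (x := z) (s := -s) (t := s + t) (by simpa using hz) hz'
      have e : -s + (s + t) = t := by abel
      rwa [e] at this
  · -- Cond1b
    intro s _ t _
    apply Set.Subset.antisymm
    · rintro _ ⟨x, ⟨hx, hx'⟩, rfl⟩
      exact ⟨F.mapsTo t trivial hx, (h2 s trivial t trivial x ⟨hx, hx'⟩).1⟩
    · rintro y ⟨hy, hy'⟩
      refine ⟨F.act (-t) y, ⟨F.mapsTo (-t) trivial (by simpa using hy), ?_⟩,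
        aux_inv_act' F h2 t hy⟩
      have := aux_mem F h1 (x := y) (s := -t) (t := -s) (by simpa using hy) hy'
      have e : -t + -s = -(s + t) := by abel
      rwa [e] at this
end

section
/- Let α be a partial action of Σ on a set X (a Σ-family satisfying the third arrow property). Then the following are equivalent: (composition property) for all s,t ∈ Σ, α_{s+t} = α_s ∘ α_t as partial maps, i.e., X_{−s−t} = {x ∈ X_{−t} : α_t(x) ∈ X_{−s}} and α_{s+t}(x) = α_s(α_t(x)) on this set; (domain ordering property) X_{−s−t} ⊆ X_{−t} for all s,t ∈ Σ. -/
namespace SigmaFamily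

variable {G : Type*} [AddCommGroup G] {S : Set G} {X : Type*}

/-- The composition property: `α_{s+t} = α_s ∘ α_t` as partial maps, i.e.
`X_{-s-t} = {x ∈ X_{-t} : α_t x ∈ X_{-s}}` and `α_{s+t} x = α_s (α_t x)` on this set. -/
def CompositionProperty (F : SigmaFamily G S X) : Prop :=
  ∀ s ∈ S, ∀ t ∈ S,
    F.D (-(s + t)) = {x | x ∈ F.D (-t) ∧ F.act t x ∈ F.D (-s)} ∧
    ∀ x ∈ F.D (-(s + t)), F.act (s + t) x = F.act s (F.act t x)

/-- The domain ordering property: `X_{-s-t} ⊆ X_{-t}` for all `s, t ∈ Σ`. -/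
def DomainOrdering (F : SigmaFamily G S X) : Prop :=
  ∀ s ∈ S, ∀ t ∈ S, F.D (-(s + t)) ⊆ F.D (-t)

end SigmaFamily

/-- For a partial action `α` of `Σ` on a set `X` (a `Σ`-family satisfying
the third arrow property), the composition property and the domain ordering property
are equivalent. -/
theorem compositionProperty_iff_domainOrdering {G : Type*} [AddCommGroup G] {S : Set G}
    {X : Type*} (hS : ∀ a ∈ S, ∀ b ∈ S, a + b ∈ S) (h0 : (0 : G) ∈ S)
    (F : SigmaFamily G S X) (hTA : F.ThirdArrow) :
    F.CompositionProperty ↔ F.DomainOrdering := by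
  constructor
  · intro hC s hs t ht x hx
    exact (((hC s hs t ht).1 ▸ hx : x ∈ {x | x ∈ F.D (-t) ∧ F.act t x ∈ F.D (-s)})).1
  · intro hD s hs t ht
    constructor
    · ext x
      constructor
      · intro hx
        have hxt : x ∈ F.D (-t) := hD s hs t ht hx
        have h1 : F.ArrowI t x (F.act t x) := ⟨hxt, rfl⟩
        have h3 : F.ArrowI (s + t) x (F.act (s + t) x) := ⟨hx, rfl⟩
        have h2 := (hTA s hs t ht x (F.act t x) (F.act (s + t) x)).2.1 h1 h3
        exact ⟨hxt, h2.1⟩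
      · rintro ⟨hxt, hys⟩
        have h1 : F.ArrowI t x (F.act t x) := ⟨hxt, rfl⟩
        have h2 : F.ArrowI s (F.act t x) (F.act s (F.act t x)) := ⟨hys, rfl⟩
        exact ((hTA s hs t ht x (F.act t x) (F.act s (F.act t x))).1 h1 h2).1
    · intro x hx
      have hxt : x ∈ F.D (-t) := hD s hs t ht hx
      have h1 : F.ArrowI t x (F.act t x) := ⟨hxt, rfl⟩
      have h3 : F.ArrowI (s + t) x (F.act (s + t) x) := ⟨hx, rfl⟩
      exact ((hTA s hs t ht x (F.act t x) (F.act (s + t) x)).2.1 h1 h3).2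
end

section
/- Let G be an abelian group totally ordered by a positive cone Σ (so Σ + Σ ⊆ Σ, Σ ∩ (−Σ) = {0}, and G = Σ ∪ (−Σ)), and let α be a partial action of Σ on a set X. Then there exists a unique partial action ᾱ of the group G on X extending α (i.e., with ᾱ_t = α_t for all t ∈ Σ), and it is given by ᾱ_{−t} = α_t^{−1} : X_t → X_{−t} for t ∈ Σ. -/
namespace SigmaFamily

variable {G : Type*} [AddCommGroup G] {S : Set G} {X : Type*}

/-- A partial action `B` of the whole group `G` (a `Σ`-family with `Σ = G`) *extends*
the `Σ`-family `F` if for every `t ∈ Σ` the partial maps `B_t` and `F_t` have the same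
domains `X_{-t}`, the same ranges `X_t`, and the same values on `X_{-t}`. -/
def Extends (B : SigmaFamily G (Set.univ : Set G) X) (F : SigmaFamily G S X) : Prop :=
  ∀ t ∈ S, B.D t = F.D t ∧ B.D (-t) = F.D (-t) ∧
    ∀ x ∈ F.D (-t), B.act t x = F.act t x

end SigmaFamily

namespace ExtAux

open SigmaFamily
open scoped Classical

variable {G : Type*} [AddCommGroup G] {S : Set G} {X : Type*}

/-- The graph relation of the extended action. -/
def Rel (F : SigmaFamily G S X) (g : G) (x y : X) : Prop :=
  (g ∈ S → F.ArrowI g x y) ∧ (-g ∈ S → F.ArrowI (-g) y x)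

theorem zero_of_mem (hcone : S ∩ (-S) = {0}) {u : G} (hu : u ∈ S) (hu' : -u ∈ S) :
    u = 0 := by
  have : u ∈ S ∩ (-S) := ⟨hu, by simpa using hu'⟩
  rw [hcone] at this
  exact this

theorem arrowI_zero_iff (F : SigmaFamily G S X) {x y : X} :
    F.ArrowI 0 x y ↔ y = x := by
  simp [SigmaFamily.ArrowI, F.D_zero, F.act_zero, neg_zero]

theorem relOfArrow (F : SigmaFamily G S X) (hcone : S ∩ (-S) = {0}) {u : G} {x y : X}
    (hu : u ∈ S) (h : F.ArrowI u x y) : Rel F u x y := by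
  refine ⟨fun _ => h, fun hu' => ?_⟩
  have h0 := zero_of_mem hcone hu hu'
  subst h0
  rw [arrowI_zero_iff] at h
  rw [neg_zero, arrowI_zero_iff]
  exact h.symm

theorem rel_symm (F : SigmaFamily G S X) {g : G} {x y : X}
    (h : Rel F g x y) : Rel F (-g) y x := by
  refine ⟨h.2, fun h' => ?_⟩
  rw [neg_neg] at h' ⊢
  exact h.1 h'

theorem rel_comp (F : SigmaFamily G S X)
    (hS : ∀ a ∈ S, ∀ b ∈ S, a + b ∈ S) (hcone : S ∩ (-S) = {0})
    (htot : ∀ g : G, g ∈ S ∨ -g ∈ S) (hTA : F.ThirdArrow) {g h : G} {x y z : X}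
    (H1 : Rel F h x y) (H2 : Rel F g y z) : Rel F (g + h) x z := by
  rcases htot h with hh | hh <;> rcases htot g with hg | hg
  · -- h ∈ S, g ∈ S
    exact relOfArrow F hcone (hS g hg h hh)
      ((hTA g hg h hh x y z).1 (H1.1 hh) (H2.1 hg))
  · -- h ∈ S, -g ∈ S
    constructor
    · intro hmem
      have e : -g + (g + h) = h := by abel
      exact (hTA (-g) hg (g + h) hmem x z y).2.2 (H2.2 hg)
        (by rw [e]; exact H1.1 hh)
    · intro hmem
      have e : h + -(g + h) = -g := by abel
      exact (hTA h hh (-(g + h)) hmem z x y).2.2 (H1.1 hh)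
        (by rw [e]; exact H2.2 hg)
  · -- -h ∈ S, g ∈ S
    constructor
    · intro hmem
      have e : g + h + -h = g := by abel
      exact (hTA (g + h) hmem (-h) hh y x z).2.1 (H1.2 hh)
        (by rw [e]; exact H2.1 hg)
    · intro hmem
      have e : -(g + h) + g = -h := by abel
      exact (hTA (-(g + h)) hmem g hg y z x).2.1 (H2.1 hg)
        (by rw [e]; exact H1.2 hh)
  · -- -h ∈ S, -g ∈ S
    have hmem : -h + -g ∈ S := hS _ hh _ hg
    have A := (hTA (-h) hh (-g) hg z y x).1 (H2.2 hg) (H1.2 hh)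
    have R : Rel F (-h + -g) z x := relOfArrow F hcone hmem A
    have R' := rel_symm F R
    have e : -(-h + -g) = g + h := by abel
    rwa [e] at R'

theorem rel_mem (F : SigmaFamily G S X) (htot : ∀ g : G, g ∈ S ∨ -g ∈ S)
    {g : G} {x y : X} (H : Rel F g x y) : x ∈ F.D (-g) ∧ y ∈ F.D g := by
  rcases htot g with hg | hg
  · obtain ⟨hx, hy⟩ := H.1 hg
    exact ⟨hx, by rw [hy]; exact F.mapsTo g hg hx⟩
  · obtain ⟨hy, hx⟩ := H.2 hg
    rw [neg_neg] at hy
    exact ⟨by rw [hx]; exact F.mapsTo (-g) hg (by rwa [neg_neg]), hy⟩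

theorem rel_unique (F : SigmaFamily G S X) (htot : ∀ g : G, g ∈ S ∨ -g ∈ S)
    {g : G} {x y y' : X} (H : Rel F g x y) (H' : Rel F g x y') : y = y' := by
  rcases htot g with hg | hg
  · exact ((H.1 hg).2).trans ((H'.1 hg).2).symm
  · obtain ⟨hy, hx⟩ := H.2 hg
    obtain ⟨hy', hx'⟩ := H'.2 hg
    exact F.injOn (-g) hg hy hy' (hx.symm.trans hx')

/-- The inverse maps, defined by choice. -/
noncomputable def inv (F : SigmaFamily G S X) (t : G) (y : X) : X :=
  if h : ∃ x ∈ F.D (-t), F.act t x = y then h.choose else y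

theorem inv_spec (F : SigmaFamily G S X) {t : G} (ht : t ∈ S) {y : X} (hy : y ∈ F.D t) :
    inv F t y ∈ F.D (-t) ∧ F.act t (inv F t y) = y := by
  have h : ∃ x ∈ F.D (-t), F.act t x = y := F.surjOn t ht hy
  rw [inv, dif_pos h]
  exact ⟨h.choose_spec.1, h.choose_spec.2⟩

/-- The action of the extension. -/
noncomputable def Bact (F : SigmaFamily G S X) (g : G) : X → X :=
  if g ∈ S then F.act g else inv F (-g)

theorem rel_Bact (F : SigmaFamily G S X) (hcone : S ∩ (-S) = {0})
    (htot : ∀ g : G, g ∈ S ∨ -g ∈ S) {g : G} {x : X} (hx : x ∈ F.D (-g)) :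
    Rel F g x (Bact F g x) := by
  by_cases hg : g ∈ S
  · rw [Bact, if_pos hg]
    exact relOfArrow F hcone hg ⟨hx, rfl⟩
  · obtain hg' := (htot g).resolve_left hg
    rw [Bact, if_neg hg]
    have spec := inv_spec F hg' hx
    have harrow : F.ArrowI (-g) (inv F (-g) x) x := ⟨spec.1, spec.2.symm⟩
    have R' := rel_symm F (relOfArrow F hcone hg' harrow)
    rwa [neg_neg] at R'

theorem rel_iff (F : SigmaFamily G S X) (hcone : S ∩ (-S) = {0})
    (htot : ∀ g : G, g ∈ S ∨ -g ∈ S) {g : G} {x y : X} :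
    Rel F g x y ↔ (x ∈ F.D (-g) ∧ y = Bact F g x) := by
  constructor
  · intro H
    have hx := (rel_mem F htot H).1
    exact ⟨hx, rel_unique F htot H (rel_Bact F hcone htot hx)⟩
  · rintro ⟨hx, rfl⟩
    exact rel_Bact F hcone htot hx

end ExtAux

open ExtAux

/-- If `G` is an abelian group totally ordered by a positive cone `Σ`
(`Σ + Σ ⊆ Σ`, `Σ ∩ (−Σ) = {0}`, `G = Σ ∪ (−Σ)`) and `α` is a partial action of `Σ` on a
set `X` (a `Σ`-family satisfying the third arrow property), then there is a unique
partial action of the group `G` on `X` extending `α` (uniqueness meaning: equal domains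
and equal values on the domains), and it is given by `ᾱ_{-t} = α_t⁻¹ : X_t → X_{-t}`
for `t ∈ Σ`. -/
theorem exists_unique_extension_of_totallyOrdered {G : Type*} [AddCommGroup G] {S : Set G}
    {X : Type*}
    (hS : ∀ a ∈ S, ∀ b ∈ S, a + b ∈ S) (hcone : S ∩ (-S) = {0})
    (htot : ∀ g : G, g ∈ S ∨ -g ∈ S)
    (F : SigmaFamily G S X) (hTA : F.ThirdArrow) :
    ∃ B : SigmaFamily G (Set.univ : Set G) X, B.Cond1' ∧ B.Cond2 ∧ B.Extends F ∧
      (∀ t ∈ S, ∀ y ∈ F.D t, B.act (-t) y ∈ F.D (-t) ∧ F.act t (B.act (-t) y) = y) ∧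
      (∀ B' : SigmaFamily G (Set.univ : Set G) X, B'.Cond1' → B'.Cond2 → B'.Extends F →
        (∀ g : G, B'.D g = B.D g) ∧ ∀ g : G, ∀ x ∈ B.D (-g), B'.act g x = B.act g x) := by
  classical
  have h0 : (0 : G) ∈ S := by
    have : (0 : G) ∈ S ∩ (-S) := by rw [hcone]; rfl
    exact this.1
  -- helper : from membership in F.D t, produce a `Rel t w x`
  have toRel : ∀ (t : G) (x : X), x ∈ F.D t →
      Rel F t (Bact F (-t) x) x := by
    intro t x hx
    have hx' : x ∈ F.D (-(-t)) := by rwa [neg_neg]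
    have R := rel_Bact F hcone htot hx'
    have R' := rel_symm F R
    rwa [neg_neg] at R'
  refine ⟨⟨F.D, Bact F, ?_, ?_, ?_, F.D_zero, ?_⟩, ?_, ?_, ?_, ?_, ?_⟩
  · -- mapsTo
    intro t _ x hx
    exact (rel_mem F htot (rel_Bact F hcone htot hx)).2
  · -- injOn
    intro t _ x hx x' hx' he
    have R := rel_symm F (rel_Bact F hcone htot hx)
    have R' := rel_symm F (rel_Bact F hcone htot hx')
    rw [he] at R
    exact rel_unique F htot R R'
  · -- surjOn
    intro t _ y hy
    have R := toRel t y hy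
    exact ⟨Bact F (-t) y, (rel_mem F htot R).1,
      ((rel_iff F hcone htot).1 R).2.symm⟩
  · -- act_zero
    intro x
    show Bact F 0 x = x
    rw [Bact, if_pos h0, F.act_zero]
  · -- Cond1'
    rintro s _ t _ y ⟨x, ⟨hxs, hxt⟩, rfl⟩
    have R1 := toRel t x hxt
    have R2 := rel_Bact F hcone htot hxs
    exact (rel_mem F htot (rel_comp F hS hcone htot hTA R1 R2)).2
  · -- Cond2
    rintro s _ t _ x ⟨hxt, hxst⟩
    have Rt := rel_Bact F hcone htot (g := t) hxt
    have Rst := rel_Bact F hcone htot (g := s + t) hxst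
    have R := rel_comp F hS hcone htot hTA (rel_symm F Rt) Rst
    have e2 : s + t + -t = s := by abel
    rw [e2] at R
    exact ⟨(rel_mem F htot R).1, ((rel_iff F hcone htot).1 R).2⟩
  · -- Extends
    intro t ht
    refine ⟨rfl, rfl, fun x _ => ?_⟩
    show Bact F t x = F.act t x
    rw [Bact, if_pos ht]
  · -- inverse property
    intro t ht y hy
    have R := toRel t y hy
    exact ⟨(rel_mem F htot R).1, ((R.1 ht).2).symm⟩
  · -- uniqueness
    intro B' _ h2' hext
    constructor
    · intro g
      rcases htot g with hg | hg
      · exact (hext g hg).1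
      · have := (hext (-g) hg).2.1
        rwa [neg_neg] at this
    · intro g x hx
      by_cases hg : g ∈ S
      · have := (hext g hg).2.2 x hx
        rw [this]
        show F.act g x = Bact F g x
        rw [Bact, if_pos hg]
      · obtain hg' := (htot g).resolve_left hg
        have hD' : B'.D (-g) = F.D (-g) := (hext (-g) hg').1
        have hDg : B'.D (-(-g)) = F.D (-(-g)) := (hext (-g) hg').2.1
        have m1 : x ∈ B'.D (-g) := by rw [hD']; exact hx
        have m2 : x ∈ B'.D (-(-g + g)) := by
          rw [neg_add_cancel, neg_zero, B'.D_zero]; exact Set.mem_univ x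
        have hc := h2' (-g) (Set.mem_univ _) g (Set.mem_univ _) x ⟨m1, m2⟩
        have hw : B'.act g x ∈ F.D (-(-g)) := by rw [← hDg]; exact hc.1
        have hval : x = F.act (-g) (B'.act g x) := by
          have e1 : B'.act (-g + g) x = x := by rw [neg_add_cancel, B'.act_zero]
          have e2 := (hext (-g) hg').2.2 (B'.act g x) hw
          rw [← e2, ← hc.2, e1]
        have harrow : F.ArrowI (-g) (B'.act g x) x := ⟨hw, hval⟩
        have R := rel_symm F (relOfArrow F hcone hg' harrow)
        rw [neg_neg] at R
        exact rel_unique F htot R (rel_Bact F hcone htot hx)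
end

section
/- Let X = {1,2,3,4,5,6,7}, G = ℤ³ and Σ = {(a,b,c) ∈ ℤ³ : a ≥ 0, b ≥ 0, c ≥ 0}. Define the Σ-family β by: β_{(0,0,0)} = id_X; β_{(1,0,0)} has domain {1,5} and sends 1 ↦ 2, 5 ↦ 4; β_{(0,1,0)} has domain {3,5} and sends 3 ↦ 2, 5 ↦ 6; β_{(0,0,1)} has domain {3,7} and sends 3 ↦ 4, 7 ↦ 6; and β_s is the empty map for all other s ∈ Σ. Then β is a partial action of Σ on X, but there is no partial action of the group ℤ³ on X extending β. (Indeed, the composition β_{(0,0,1)}^{−1} ∘ β_{(0,1,0)} ∘ β_{(1,0,0)}^{−1} ∘ β_{(0,0,1)} ∘ β_{(0,1,0)}^{−1} ∘ β_{(1,0,0)} sends 1 to 7.) -/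
namespace SigmaFamily

variable {G : Type*} [AddCommGroup G] {S : Set G} {X : Type*}

/-- One step of a composite partial map: `y = α_t⁻¹ (α_s x)`, i.e. `x ∈ X_{-s}`,
`y ∈ X_{-t}` and `α_t y = α_s x`. -/
def Step (F : SigmaFamily G S X) (s t : G) (x y : X) : Prop :=
  x ∈ F.D (-s) ∧ y ∈ F.D (-t) ∧ F.act t y = F.act s x

/-- `CompRel F [(s₁,t₁),…,(sₙ,tₙ)] x y` says that `y` is the image of `x` under the
composite partial map `α_{tₙ}⁻¹ ∘ α_{sₙ} ∘ ⋯ ∘ α_{t₁}⁻¹ ∘ α_{s₁}` (applying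
`α_{t₁}⁻¹ ∘ α_{s₁}` first). -/
def CompRel (F : SigmaFamily G S X) : List (G × G) → X → X → Prop
  | [], x, y => x = y
  | p :: L, x, y => ∃ w, F.Step p.1 p.2 x w ∧ CompRel F L w y

end SigmaFamily

/- STATEMENT 6.  The seven-point space `X = {1,…,7}` is encoded as `Fin 7`, the point
`k` of the paper corresponding to `(k - 1 : Fin 7)`.  The group is `G = ℤ³ = ℤ × ℤ × ℤ`
with the usual positive cone `S3`. -/

/-- The positive cone of `ℤ³`. -/
def S3 : Set (ℤ × ℤ × ℤ) := {g | 0 ≤ g.1 ∧ 0 ≤ g.2.1 ∧ 0 ≤ g.2.2}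

/-- Domains/ranges: `β_{(1,0,0)} : {1,5} → {2,4}`, `β_{(0,1,0)} : {3,5} → {2,6}`,
`β_{(0,0,1)} : {3,7} → {4,6}` (paper's labels); here in
zero-based labels: `{0,4} → {1,3}`, `{2,4} → {1,5}`, `{2,6} → {3,5}`.  All other
`β_g` (apart from `β_0 = id`) are empty. -/
def D6 : (ℤ × ℤ × ℤ) → Set (Fin 7) := fun g =>
  if g = 0 then Set.univ
  else if g = (-1, 0, 0) then {0, 4}
  else if g = (1, 0, 0) then {1, 3}
  else if g = (0, -1, 0) then {2, 4}
  else if g = (0, 1, 0) then {1, 5}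
  else if g = (0, 0, -1) then {2, 6}
  else if g = (0, 0, 1) then {3, 5}
  else ∅

/-- The maps: `β_{(1,0,0)}` sends `1 ↦ 2`, `5 ↦ 4`; `β_{(0,1,0)}` sends `3 ↦ 2`,
`5 ↦ 6`; `β_{(0,0,1)}` sends `3 ↦ 4`, `7 ↦ 6` (in zero-based labels: `0 ↦ 1`, `4 ↦ 3`;
`2 ↦ 1`, `4 ↦ 5`; `2 ↦ 3`, `6 ↦ 5`). -/
def act6 : (ℤ × ℤ × ℤ) → Fin 7 → Fin 7 := fun g x =>
  if g = (1, 0, 0) then (if x = 0 then 1 else if x = 4 then 3 else x)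
  else if g = (0, 1, 0) then (if x = 2 then 1 else if x = 4 then 5 else x)
  else if g = (0, 0, 1) then (if x = 2 then 3 else if x = 6 then 5 else x)
  else x


section Aux

lemma D6_empty {g : ℤ × ℤ × ℤ} (h0 : g ≠ 0) (h1 : g ≠ (-1,0,0)) (h2 : g ≠ (1,0,0))
    (h3 : g ≠ (0,-1,0)) (h4 : g ≠ (0,1,0)) (h5 : g ≠ (0,0,-1)) (h6 : g ≠ (0,0,1)) :
    D6 g = ∅ := by
  simp only [D6, if_neg h0, if_neg h1, if_neg h2, if_neg h3, if_neg h4, if_neg h5, if_neg h6]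

lemma triple_ne {a b c d e f : ℤ} (h : ¬ (a = d ∧ b = e ∧ c = f)) :
    ((a, b, c) : ℤ × ℤ × ℤ) ≠ (d, e, f) := by
  simp only [ne_eq, Prod.mk.injEq, not_and]
  tauto

lemma classify {t : ℤ × ℤ × ℤ} (ht : t ∈ S3) :
    t = 0 ∨ t = (1,0,0) ∨ t = (0,1,0) ∨ t = (0,0,1) ∨ (D6 t = ∅ ∧ D6 (-t) = ∅) := by
  obtain ⟨a, b, c⟩ := t
  obtain ⟨ha, hb, hc⟩ := ht
  simp only at ha hb hc
  by_cases h0 : a = 0 ∧ b = 0 ∧ c = 0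
  · exact Or.inl (by obtain ⟨rfl, rfl, rfl⟩ := h0; rfl)
  by_cases h1 : a = 1 ∧ b = 0 ∧ c = 0
  · exact Or.inr (Or.inl (by obtain ⟨rfl, rfl, rfl⟩ := h1; rfl))
  by_cases h2 : a = 0 ∧ b = 1 ∧ c = 0
  · exact Or.inr (Or.inr (Or.inl (by obtain ⟨rfl, rfl, rfl⟩ := h2; rfl)))
  by_cases h3 : a = 0 ∧ b = 0 ∧ c = 1
  · exact Or.inr (Or.inr (Or.inr (Or.inl (by obtain ⟨rfl, rfl, rfl⟩ := h3; rfl))))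
  refine Or.inr (Or.inr (Or.inr (Or.inr ⟨?_, ?_⟩)))
  · refine D6_empty ?_ ?_ ?_ ?_ ?_ ?_ ?_ <;>
    · refine triple_ne ?_; omega
  · show D6 (-a, -b, -c) = ∅
    refine D6_empty ?_ ?_ ?_ ?_ ?_ ?_ ?_ <;>
    · refine triple_ne ?_; omega

lemma sum_empty {s t : ℤ × ℤ × ℤ} (hs : s ∈ S3) (ht : t ∈ S3) (hs0 : s ≠ 0) (ht0 : t ≠ 0) :
    D6 (s + t) = ∅ ∧ D6 (-(s + t)) = ∅ := by
  obtain ⟨a, b, c⟩ := s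
  obtain ⟨d, e, f⟩ := t
  obtain ⟨ha, hb, hc⟩ := hs
  obtain ⟨hd, he, hf⟩ := ht
  simp only at ha hb hc hd he hf
  have hs0' : ¬(a = 0 ∧ b = 0 ∧ c = 0) := fun h => hs0 (by obtain ⟨rfl,rfl,rfl⟩ := h; rfl)
  have ht0' : ¬(d = 0 ∧ e = 0 ∧ f = 0) := fun h => ht0 (by obtain ⟨rfl,rfl,rfl⟩ := h; rfl)
  constructor
  · show D6 (a + d, b + e, c + f) = ∅
    refine D6_empty ?_ ?_ ?_ ?_ ?_ ?_ ?_ <;>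
    · refine triple_ne ?_; omega
  · show D6 (-(a + d), -(b + e), -(c + f)) = ∅
    refine D6_empty ?_ ?_ ?_ ?_ ?_ ?_ ?_ <;>
    · refine triple_ne ?_; omega

lemma D6_neg_e1 : D6 (-(1,0,0)) = {0, 4} := by norm_num [D6]
lemma D6_e1 : D6 (1,0,0) = {1, 3} := by norm_num [D6]
lemma D6_neg_e2 : D6 (-(0,1,0)) = {2, 4} := by norm_num [D6]
lemma D6_e2 : D6 (0,1,0) = {1, 5} := by norm_num [D6]
lemma D6_neg_e3 : D6 (-(0,0,1)) = {2, 6} := by norm_num [D6]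
lemma D6_e3 : D6 (0,0,1) = {3, 5} := by norm_num [D6]

lemma act6_ne {g : ℤ × ℤ × ℤ} (h1 : g ≠ (1,0,0)) (h2 : g ≠ (0,1,0)) (h3 : g ≠ (0,0,1))
    (x : Fin 7) : act6 g x = x := by
  simp only [act6, if_neg h1, if_neg h2, if_neg h3]

lemma act6_zero (x : Fin 7) : act6 0 x = x :=
  act6_ne (by decide) (by decide) (by decide) x

lemma D6_zero : D6 0 = Set.univ := by simp [D6]

/-- The concrete Σ-family. -/
def F6 : SigmaFamily (ℤ × ℤ × ℤ) S3 (Fin 7) where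
  D := D6
  act := act6
  mapsTo := by
    intro t ht
    rcases classify ht with rfl | rfl | rfl | rfl | ⟨h1, h2⟩
    · intro x _; show act6 0 x ∈ D6 0; rw [act6_zero, D6_zero]; trivial
    · rw [D6_neg_e1, D6_e1]
      rintro x (rfl | rfl) <;>
        simp only [Set.mem_insert_iff, Set.mem_singleton_iff] <;> decide
    · rw [D6_neg_e2, D6_e2]
      rintro x (rfl | rfl) <;>
        simp only [Set.mem_insert_iff, Set.mem_singleton_iff] <;> decide
    · rw [D6_neg_e3, D6_e3]
      rintro x (rfl | rfl) <;>
        simp only [Set.mem_insert_iff, Set.mem_singleton_iff] <;> decide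
    · rw [h2]; exact fun x hx => absurd hx (by simp)
  injOn := by
    intro t ht
    rcases classify ht with rfl | rfl | rfl | rfl | ⟨h1, h2⟩
    · intro x _ y _ h; rwa [act6_zero, act6_zero] at h
    · rw [D6_neg_e1]
      rintro x (rfl | rfl) y (rfl | rfl) h <;> first | rfl | (exact absurd h (by decide))
    · rw [D6_neg_e2]
      rintro x (rfl | rfl) y (rfl | rfl) h <;> first | rfl | (exact absurd h (by decide))
    · rw [D6_neg_e3]
      rintro x (rfl | rfl) y (rfl | rfl) h <;> first | rfl | (exact absurd h (by decide))
    · rw [h2]; exact fun x hx => absurd hx (by simp)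
  surjOn := by
    intro t ht
    rcases classify ht with rfl | rfl | rfl | rfl | ⟨h1, h2⟩
    · intro x _; exact ⟨x, by rw [neg_zero, D6_zero]; trivial, act6_zero x⟩
    · rw [D6_neg_e1, D6_e1]
      rintro x (rfl | rfl)
      · exact ⟨0, Or.inl rfl, by decide⟩
      · exact ⟨4, Or.inr rfl, by decide⟩
    · rw [D6_neg_e2, D6_e2]
      rintro x (rfl | rfl)
      · exact ⟨2, Or.inl rfl, by decide⟩
      · exact ⟨4, Or.inr rfl, by decide⟩
    · rw [D6_neg_e3, D6_e3]
      rintro x (rfl | rfl)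
      · exact ⟨2, Or.inl rfl, by decide⟩
      · exact ⟨6, Or.inr rfl, by decide⟩
    · rw [h1]; exact fun x hx => absurd hx (by simp)
  D_zero := D6_zero
  act_zero := act6_zero

/-- Disjointness of ranges and domains: for nonzero `s, t` in the cone,
`D6 t ∩ D6 (-s) = ∅`. -/
lemma range_dom_disj {s t : ℤ × ℤ × ℤ} (hs : s ∈ S3) (ht : t ∈ S3)
    (hs0 : s ≠ 0) (ht0 : t ≠ 0) {y : Fin 7} (h1 : y ∈ D6 t) (h2 : y ∈ D6 (-s)) : False := by
  rcases classify ht with rfl | rfl | rfl | rfl | ⟨he, _⟩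
  · exact ht0 rfl
  all_goals try (rw [he] at h1; exact h1)
  all_goals rcases classify hs with rfl | rfl | rfl | rfl | ⟨_, he'⟩
  all_goals try exact hs0 rfl
  all_goals try (rw [he'] at h2; exact h2)
  all_goals
    first
    | (rw [D6_e1] at h1; rw [D6_neg_e1] at h2) | (rw [D6_e1] at h1; rw [D6_neg_e2] at h2)
    | (rw [D6_e1] at h1; rw [D6_neg_e3] at h2) | (rw [D6_e2] at h1; rw [D6_neg_e1] at h2)
    | (rw [D6_e2] at h1; rw [D6_neg_e2] at h2) | (rw [D6_e2] at h1; rw [D6_neg_e3] at h2)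
    | (rw [D6_e3] at h1; rw [D6_neg_e1] at h2) | (rw [D6_e3] at h1; rw [D6_neg_e2] at h2)
    | (rw [D6_e3] at h1; rw [D6_neg_e3] at h2)
  all_goals
    rcases h1 with rfl | rfl <;>
      simp only [Set.mem_insert_iff, Set.mem_singleton_iff] at h2 <;>
      exact absurd h2 (by decide)

end Aux


lemma F6_D : F6.D = D6 := rfl
lemma F6_act : F6.act = act6 := rfl

lemma F6_arrowI (t : ℤ × ℤ × ℤ) (x y : Fin 7) :
    F6.ArrowI t x y ↔ (x ∈ D6 (-t) ∧ y = act6 t x) := Iff.rfl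

lemma F6_arrowI_zero (x y : Fin 7) : F6.ArrowI 0 x y ↔ y = x := by
  rw [F6_arrowI, neg_zero, D6_zero, act6_zero]
  simp

lemma F6_third : F6.ThirdArrow := by
  intro s hs t ht x y z
  by_cases hs0 : s = 0
  · subst hs0
    rw [zero_add]
    refine ⟨fun h1 h2 => ?_, fun h1 h2 => ?_, fun h1 h2 => ?_⟩
    · rw [(F6_arrowI_zero _ _).mp h2]; exact h1
    · exact (F6_arrowI_zero _ _).mpr (by rw [h2.2, h1.2])
    · rw [(F6_arrowI_zero _ _).mp h1] at h2; exact h2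
  by_cases ht0 : t = 0
  · subst ht0
    rw [add_zero]
    refine ⟨fun h1 h2 => ?_, fun h1 h2 => ?_, fun h1 h2 => ?_⟩
    · rw [← (F6_arrowI_zero _ _).mp h1]; exact h2
    · rw [(F6_arrowI_zero _ _).mp h1]; exact h2
    · rw [F6_arrowI_zero]
      exact F6.injOn s hs h1.1 h2.1 (by rw [← h1.2, ← h2.2])
  · have hsum := sum_empty hs ht hs0 ht0
    have hfalse : ∀ w v : Fin 7, ¬ F6.ArrowI (s + t) w v := by
      intro w v hwv
      have hw : w ∈ D6 (-(s + t)) := hwv.1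
      rw [hsum.2] at hw
      exact hw
    refine ⟨fun h1 h2 => ?_, fun _ h2 => absurd h2 (hfalse _ _),
      fun _ h2 => absurd h2 (hfalse _ _)⟩
    · exfalso
      have hy1 : y ∈ D6 t := by
        have h := F6.mapsTo t ht h1.1
        rw [← h1.2] at h
        exact h
      exact range_dom_disj hs ht hs0 ht0 hy1 h2.1

lemma F6_comp :
    F6.CompRel [((1,0,0), (0,1,0)), ((0,0,1), (1,0,0)), ((0,1,0), (0,0,1))] 0 6 := by
  refine ⟨2, ⟨?_, ?_, ?_⟩, 4, ⟨?_, ?_, ?_⟩, 6, ⟨?_, ?_, ?_⟩, rfl⟩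
  · show (0 : Fin 7) ∈ D6 (-(1,0,0)); rw [D6_neg_e1]; exact Or.inl rfl
  · show (2 : Fin 7) ∈ D6 (-(0,1,0)); rw [D6_neg_e2]; exact Or.inl rfl
  · show act6 (0,1,0) 2 = act6 (1,0,0) 0; decide
  · show (2 : Fin 7) ∈ D6 (-(0,0,1)); rw [D6_neg_e3]; exact Or.inl rfl
  · show (4 : Fin 7) ∈ D6 (-(1,0,0)); rw [D6_neg_e1]; exact Or.inr rfl
  · show act6 (1,0,0) 4 = act6 (0,0,1) 2; decide
  · show (4 : Fin 7) ∈ D6 (-(0,1,0)); rw [D6_neg_e2]; exact Or.inr rfl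
  · show (6 : Fin 7) ∈ D6 (-(0,0,1)); rw [D6_neg_e3]; exact Or.inr rfl
  · show act6 (0,0,1) 6 = act6 (0,1,0) 4; decide

lemma F6_noext :
    ¬ ∃ B : SigmaFamily (ℤ × ℤ × ℤ) (Set.univ : Set (ℤ × ℤ × ℤ)) (Fin 7),
        B.Cond1' ∧ B.Cond2 ∧ B.Extends F6 := by
  rintro ⟨B, hB1, hB2, hext⟩
  have P1 : ∀ (t : ℤ × ℤ × ℤ) (y : Fin 7), y ∈ B.D (-t) →
      B.act t y ∈ B.D t ∧ B.act (-t) (B.act t y) = y := by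
    intro t y hy
    have h0 : y ∈ B.D (-t) ∩ B.D (-(-t + t)) :=
      ⟨hy, by rw [neg_add_cancel, neg_zero, B.D_zero]; trivial⟩
    obtain ⟨hmem, heq⟩ := hB2 (-t) trivial t trivial y h0
    rw [neg_neg] at hmem
    rw [neg_add_cancel, B.act_zero] at heq
    exact ⟨hmem, heq.symm⟩
  have Pstep : ∀ (s t : ℤ × ℤ × ℤ) (x y : Fin 7), x ∈ B.D (-s) → y ∈ B.D (-t) →
      B.act t y = B.act s x → x ∈ B.D (-(s - t)) ∧ y = B.act (s - t) x := by
    intro s t x y hx hy heq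
    obtain ⟨hsx, hxx⟩ := P1 s x hx
    obtain ⟨hty, hyy⟩ := P1 t y hy
    have hximg : x ∈ B.act (-s) '' (B.D (-(-s)) ∩ B.D t) :=
      ⟨B.act s x, by rw [neg_neg]; exact ⟨hsx, heq ▸ hty⟩, hxx⟩
    have hxt : x ∈ B.D (-s + t) := hB1 (-s) trivial t trivial hximg
    have hxt' : x ∈ B.D (-(s - t)) := by
      rwa [show -(s - t) = -s + t from by abel]
    obtain ⟨_, heq2⟩ := hB2 (-t) trivial s trivial x
      ⟨hx, by rwa [show -(-t + s) = -(s - t) from by abel]⟩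
    rw [← heq] at heq2
    rw [hyy] at heq2
    exact ⟨hxt', by rw [show s - t = -t + s from by abel]; exact heq2.symm⟩
  have Pcomp : ∀ (g h : ℤ × ℤ × ℤ) (x y z : Fin 7), x ∈ B.D (-g) → y = B.act g x →
      y ∈ B.D (-h) → z = B.act h y → x ∈ B.D (-(h + g)) ∧ z = B.act (h + g) x := by
    intro g h x y z hx hy hyh hz
    obtain ⟨hgx, hxx⟩ := P1 g x hx
    have himg : x ∈ B.act (-g) '' (B.D (-(-g)) ∩ B.D (-h)) :=
      ⟨B.act g x, by rw [neg_neg]; exact ⟨hgx, hy ▸ hyh⟩, hxx⟩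
    have hxgh : x ∈ B.D (-g + -h) := hB1 (-g) trivial (-h) trivial himg
    have hx' : x ∈ B.D (-(h + g)) := by
      rwa [show -(h + g) = -g + -h from by abel]
    obtain ⟨_, heq⟩ := hB2 h trivial g trivial x ⟨hx, hx'⟩
    exact ⟨hx', by rw [heq, ← hy, ← hz]⟩
  have he1 : ((1,0,0) : ℤ × ℤ × ℤ) ∈ S3 := ⟨by norm_num, by norm_num, by norm_num⟩
  have he2 : ((0,1,0) : ℤ × ℤ × ℤ) ∈ S3 := ⟨by norm_num, by norm_num, by norm_num⟩
  have he3 : ((0,0,1) : ℤ × ℤ × ℤ) ∈ S3 := ⟨by norm_num, by norm_num, by norm_num⟩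
  have conv : ∀ s t : ℤ × ℤ × ℤ, s ∈ S3 → t ∈ S3 → ∀ x y : Fin 7, F6.Step s t x y →
      x ∈ B.D (-(s - t)) ∧ y = B.act (s - t) x := by
    rintro s t hs ht x y ⟨hx, hy, he⟩
    obtain ⟨_, hDs, hAs⟩ := hext s hs
    obtain ⟨_, hDt, hAt⟩ := hext t ht
    refine Pstep s t x y (hDs ▸ hx) (hDt ▸ hy) ?_
    rw [hAt y hy, hAs x hx]
    exact he
  obtain ⟨w1, st1, w2, st2, w3, st3, h36⟩ := F6_comp
  obtain ⟨hA, hB'⟩ := conv (1,0,0) (0,1,0) he1 he2 0 w1 st1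
  obtain ⟨hC, hD'⟩ := conv (0,0,1) (1,0,0) he3 he1 w1 w2 st2
  obtain ⟨hE, hF'⟩ := conv (0,1,0) (0,0,1) he2 he3 w2 w3 st3
  obtain ⟨hG, hH⟩ := Pcomp ((1,0,0) - (0,1,0)) ((0,0,1) - (1,0,0)) 0 w1 w2 hA hB' hC hD'
  obtain ⟨_, hI⟩ := Pcomp (((0,0,1) - (1,0,0)) + ((1,0,0) - (0,1,0))) ((0,1,0) - (0,0,1))
    0 w2 w3 hG hH hE hF'
  rw [show (((0,1,0) - (0,0,1)) + (((0,0,1) - (1,0,0)) + ((1,0,0) - (0,1,0))) : ℤ × ℤ × ℤ)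
    = 0 from by abel, B.act_zero] at hI
  rw [h36] at hI
  exact absurd hI (by decide)


/-- the family `β` above is a partial action of the positive cone of `ℤ³`
on the seven point space (it satisfies the third arrow property), the composite
`β_{(0,0,1)}⁻¹ ∘ β_{(0,1,0)} ∘ β_{(1,0,0)}⁻¹ ∘ β_{(0,0,1)} ∘ β_{(0,1,0)}⁻¹ ∘ β_{(1,0,0)}`
sends the point `1` to the point `7`, and there is no partial action of the group `ℤ³`
on `X` extending `β`. -/


theorem sevenPoint_no_extension :
    ∃ F : SigmaFamily (ℤ × ℤ × ℤ) S3 (Fin 7), F.D = D6 ∧ F.act = act6 ∧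
      F.ThirdArrow ∧
      F.CompRel [((1,0,0), (0,1,0)), ((0,0,1), (1,0,0)), ((0,1,0), (0,0,1))] 0 6 ∧
      ¬ ∃ B : SigmaFamily (ℤ × ℤ × ℤ) (Set.univ : Set (ℤ × ℤ × ℤ)) (Fin 7),
          B.Cond1' ∧ B.Cond2 ∧ B.Extends F := by
  exact ⟨F6, rfl, rfl, F6_third, F6_comp, F6_noext⟩
end

section
/- Let X = {exp(it) : 0 < t < 1} be an arc in the unit circle of ℂ. For n ∈ ℤ, let X_{−n} = {x ∈ X : exp(in)·x ∈ X} and α_n(x) = exp(in)·x for x ∈ X_{−n}. Then: (i) the restriction of α to Σ = ℤ⁺ = {n ∈ ℤ : n ≥ 0} is a partial action of Σ on X; (ii) X_{−3} = ∅ while X_{−6} ≠ ∅ and X_{−7} ≠ ∅, so the domain ordering property fails (X_{−7} ⊄ X_{−3}) and the composition property fails (α_4 ∘ α_3 is the empty map while α_7 is not); (iii) this partial action is non-degenerate, i.e., the subgroup of ℤ generated by {s ∈ Σ : X_s ≠ ∅} is all of ℤ (it contains 6 and 7). -/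
noncomputable section
open scoped Classical

/-- The arc `X = {e^{it} : 0 < t < 1}` in the unit circle of `ℂ`. -/
def arcSet : Set ℂ := {z | ∃ t : ℝ, 0 < t ∧ t < 1 ∧ z = Complex.exp (t * Complex.I)}

/-- Domains: `X_{-n} = {x ∈ X : e^{in} x ∈ X}`; for a general index `g` (so `g = -n`
for the domain of `α_n`, and `g = n` for its range), `D g = {x ∈ X : e^{-ig} x ∈ X}`. -/
def Darc : ℤ → Set ↥arcSet := fun g =>
  {x | Complex.exp (-(g : ℂ) * Complex.I) * (x : ℂ) ∈ arcSet}

/-- The rotations `α_n x = e^{in} x`, as total maps (identity wherever `e^{in} x`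
leaves the arc). -/
noncomputable def actArc : ℤ → ↥arcSet → ↥arcSet := fun n x =>
  if h : Complex.exp ((n : ℂ) * Complex.I) * (x : ℂ) ∈ arcSet then ⟨_, h⟩ else x

open Complex in
lemma exp_ofReal_mul_I_add (a b : ℝ) :
    Complex.exp ((a:ℂ)*I) * Complex.exp ((b:ℂ)*I) = Complex.exp (((a+b : ℝ):ℂ)*I) := by
  rw [← Complex.exp_add]; push_cast; ring_nf

open Complex in
lemma exp_sub_two_pi (a : ℝ) :
    Complex.exp (((a - 2*Real.pi : ℝ):ℂ)*I) = Complex.exp ((a:ℂ)*I) := by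
  have h : ((a:ℂ))*I = ((a - 2*Real.pi : ℝ):ℂ)*I + 2*(Real.pi:ℂ)*I := by push_cast; ring
  rw [h, Complex.exp_add, Complex.exp_two_pi_mul_I, mul_one]

open Complex in
lemma exp_real_eq {a b : ℝ} (h : Complex.exp ((a:ℂ)*I) = Complex.exp ((b:ℂ)*I)) :
    ∃ n : ℤ, a - b = 2*Real.pi*n := by
  rw [Complex.exp_eq_exp_iff_exists_int] at h
  obtain ⟨n, hn⟩ := h
  refine ⟨n, ?_⟩
  have him := congrArg Complex.im hn
  simp [Complex.mul_im] at him
  linarith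

lemma exp_mem_arc {t : ℝ} (h0 : 0 < t) (h1 : t < 1) :
    Complex.exp ((t:ℂ) * Complex.I) ∈ arcSet := ⟨t, h0, h1, rfl⟩

/-- A point of the arc. -/
def arcPt (t : ℝ) (h0 : 0 < t) (h1 : t < 1) : ↥arcSet :=
  ⟨Complex.exp ((t:ℂ) * Complex.I), t, h0, h1, rfl⟩

open Complex in
lemma mem_Darc_neg (n : ℤ) (x : ↥arcSet) :
    x ∈ Darc (-n) ↔ Complex.exp ((n:ℂ)*I) * (x:ℂ) ∈ arcSet := by
  simp [Darc]

open Complex in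
lemma actArc_apply {n : ℤ} {x : ↥arcSet}
    (h : Complex.exp ((n:ℂ)*I) * (x:ℂ) ∈ arcSet) :
    (actArc n x : ℂ) = Complex.exp ((n:ℂ)*I) * (x:ℂ) := by
  rw [actArc, dif_pos h]

open Complex in
/-- No integer multiple of `2π` lies in `(2, 2π)`. -/
lemma no_two_pi_mul (n : ℤ) (h1 : 2 < 2*Real.pi*(n:ℝ)) (h2 : 2*Real.pi*(n:ℝ) < 2*Real.pi) :
    False := by
  have hpi := Real.pi_gt_three
  have hn0 : (0:ℝ) < (n:ℝ) := by nlinarith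
  have hn1 : (1:ℝ) ≤ (n:ℝ) := by exact_mod_cast Int.cast_pos.mp hn0
  nlinarith

open Complex in
lemma Darc_neg_three : Darc (-3) = ∅ := by
  ext x
  simp only [Set.mem_empty_iff_false, iff_false]
  intro hx
  rw [show ((-3 : ℤ)) = -(3:ℤ) by ring] at hx
  rw [mem_Darc_neg] at hx
  obtain ⟨t, ht0, ht1, hxt⟩ := x.2
  obtain ⟨s, hs0, hs1, hs⟩ := hx
  rw [hxt] at hs
  have h3 : Complex.exp (((3 + t : ℝ):ℂ)*I) = Complex.exp ((s:ℝ)*I) := by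
    rw [← exp_ofReal_mul_I_add]
    rw [← hs]; norm_num
  obtain ⟨n, hn⟩ := exp_real_eq h3
  refine no_two_pi_mul n (by linarith) ?_
  have := Real.pi_gt_three
  linarith

open Complex in
lemma exp_sub_int_two_pi (a : ℝ) (m : ℤ) :
    Complex.exp (((a - 2*Real.pi*m : ℝ):ℂ)*I) = Complex.exp ((a:ℂ)*I) := by
  have h : ((a:ℂ))*I = ((a - 2*Real.pi*m : ℝ):ℂ)*I + (m:ℂ)*(2*(Real.pi:ℂ)*I) := by
    push_cast; ring
  rw [h, Complex.exp_add, Complex.exp_int_mul_two_pi_mul_I, mul_one]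

open Complex in
lemma Darc_nonempty (k m : ℤ) (t : ℝ) (h0 : 0 < t) (h1 : t < 1)
    (ha : 0 < t - k - 2*Real.pi*m) (hb : t - k - 2*Real.pi*m < 1) :
    Darc k ≠ ∅ := by
  intro h
  have hmem : arcPt t h0 h1 ∈ Darc k := by
    show Complex.exp (-(k:ℂ)*I) * (arcPt t h0 h1 : ℂ) ∈ arcSet
    have heq : Complex.exp (-(k:ℂ)*I) * (arcPt t h0 h1 : ℂ)
        = Complex.exp (((-k + t : ℝ):ℂ)*I) := by
      rw [show (-(k:ℂ)) = (((-k : ℝ)):ℂ) by push_cast; ring]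
      exact exp_ofReal_mul_I_add (-k) t
    rw [heq, show ((-(k:ℝ)) + t)
        = (t - k - 2*Real.pi*(m:ℤ)) - 2*Real.pi*((-m : ℤ) : ℤ) by push_cast; ring,
      exp_sub_int_two_pi]
    exact exp_mem_arc ha hb
  rw [h] at hmem
  exact hmem

/-- The Σ-family of the arc example. -/
noncomputable def arcFamily : SigmaFamily ℤ {n : ℤ | 0 ≤ n} ↥arcSet where
  D := Darc
  act := actArc
  mapsTo := by
    intro t _ x hx
    rw [mem_Darc_neg] at hx
    show actArc t x ∈ Darc t
    have hval := actArc_apply hx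
    show Complex.exp (-(t:ℂ)*Complex.I) * (actArc t x : ℂ) ∈ arcSet
    rw [hval, ← mul_assoc, ← Complex.exp_add]
    norm_num
  injOn := by
    intro t _ x hx y hy hxy
    rw [mem_Darc_neg] at hx hy
    have := congrArg (Subtype.val) hxy
    rw [actArc_apply hx, actArc_apply hy] at this
    exact Subtype.ext (mul_left_cancel₀ (Complex.exp_ne_zero _) this)
  surjOn := by
    intro t _ y hy
    have hy' : Complex.exp (-(t:ℂ)*Complex.I) * (y:ℂ) ∈ arcSet := hy
    refine ⟨⟨_, hy'⟩, ?_, ?_⟩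
    · rw [mem_Darc_neg]
      show Complex.exp _ * (Complex.exp (-(t:ℂ)*Complex.I) * (y:ℂ)) ∈ arcSet
      rw [← mul_assoc, ← Complex.exp_add]
      norm_num
    · have hc : Complex.exp ((t:ℂ)*Complex.I) *
          ((⟨_, hy'⟩ : ↥arcSet) : ℂ) ∈ arcSet := by
        show Complex.exp _ * (Complex.exp (-(t:ℂ)*Complex.I) * (y:ℂ)) ∈ arcSet
        rw [← mul_assoc, ← Complex.exp_add]
        norm_num
      apply Subtype.ext
      rw [actArc_apply hc]
      show Complex.exp _ * (Complex.exp (-(t:ℂ)*Complex.I) * (y:ℂ)) = (y:ℂ)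
      rw [← mul_assoc, ← Complex.exp_add]
      norm_num
  D_zero := by
    ext x
    simp only [Set.mem_univ, iff_true]
    show Complex.exp (-((0:ℤ):ℂ)*Complex.I) * (x:ℂ) ∈ arcSet
    norm_num
  act_zero := by
    intro x
    have h : Complex.exp (((0:ℤ):ℂ)*Complex.I) * (x:ℂ) ∈ arcSet := by
      norm_num
    apply Subtype.ext
    rw [actArc_apply h]
    norm_num

open Complex in
lemma arcFamily_arrowI (n : ℤ) (x y : ↥arcSet) :
    arcFamily.ArrowI n x y ↔
      Complex.exp ((n:ℂ)*I) * (x:ℂ) ∈ arcSet ∧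
        (y:ℂ) = Complex.exp ((n:ℂ)*I) * (x:ℂ) := by
  constructor
  · rintro ⟨hx, hy⟩
    rw [show arcFamily.D = Darc from rfl, mem_Darc_neg] at hx
    refine ⟨hx, ?_⟩
    rw [hy]
    exact actArc_apply hx
  · rintro ⟨hx, hy⟩
    exact ⟨(mem_Darc_neg n x).mpr hx, Subtype.ext (hy.trans (actArc_apply hx).symm)⟩

open Complex in
lemma exp_int_add (s t : ℤ) (x : ℂ) :
    Complex.exp (((s+t:ℤ):ℂ)*I) * x = Complex.exp ((s:ℂ)*I) * (Complex.exp ((t:ℂ)*I) * x) := by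
  rw [← mul_assoc, ← Complex.exp_add]
  push_cast
  ring_nf


/-- (i) the restriction of `α` to `Σ = ℤ⁺` is a partial action of `Σ` on
the arc `X` (it satisfies the third arrow property); (ii) `X_{-3} = ∅` while
`X_{-6} ≠ ∅` and `X_{-7} ≠ ∅`, so the domain ordering property fails
(`X_{-7} ⊄ X_{-3}`) and the composition property fails (`α_4 ∘ α_3` is the empty map,
its natural domain `{x ∈ X_{-3} : α_3 x ∈ X_{-4}}` being empty, while `α_7` is not);
(iii) the partial action is non-degenerate: the subgroup of `ℤ` generated by
`{s ∈ Σ : X_s ≠ ∅}` is all of `ℤ` (indeed `X_6 ≠ ∅` and `X_7 ≠ ∅`). -/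

theorem arc_partialAction :
    ∃ F : SigmaFamily ℤ {n : ℤ | 0 ≤ n} ↥arcSet, F.D = Darc ∧ F.act = actArc ∧
      F.ThirdArrow ∧
      F.D (-3) = ∅ ∧ F.D (-6) ≠ ∅ ∧ F.D (-7) ≠ ∅ ∧
      ¬ F.D (-7) ⊆ F.D (-3) ∧
      {x ∈ F.D (-3) | F.act 3 x ∈ F.D (-4)} = ∅ ∧
      F.D 6 ≠ ∅ ∧ F.D 7 ≠ ∅ ∧
      AddSubgroup.closure {s : ℤ | 0 ≤ s ∧ F.D s ≠ ∅} = ⊤ := by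
  refine ⟨arcFamily, rfl, rfl, ?_, ?_, ?_, ?_, ?_, ?_, ?_, ?_, ?_⟩
  · -- ThirdArrow
    intro s _ t _ x y z
    refine ⟨?_, ?_, ?_⟩
    · intro h1 h2
      rw [arcFamily_arrowI] at h1 h2 ⊢
      obtain ⟨hx, hy⟩ := h1
      obtain ⟨hy2, hz⟩ := h2
      rw [exp_int_add, ← hy]
      exact ⟨hy2, hz⟩
    · intro h1 h3
      rw [arcFamily_arrowI] at h1 h3 ⊢
      obtain ⟨hx, hy⟩ := h1
      obtain ⟨hxz, hz⟩ := h3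
      rw [exp_int_add, ← hy] at hxz hz
      exact ⟨hxz, hz⟩
    · intro h2 h3
      rw [arcFamily_arrowI] at h2 h3 ⊢
      obtain ⟨hy, hz⟩ := h2
      obtain ⟨hxz, hz'⟩ := h3
      rw [exp_int_add] at hxz hz'
      have hyx : (y:ℂ) = Complex.exp ((t:ℂ)*Complex.I) * (x:ℂ) :=
        mul_left_cancel₀ (Complex.exp_ne_zero _) (hz.symm.trans hz')
      refine ⟨?_, hyx⟩
      rw [← hyx]
      exact y.2
  · exact Darc_neg_three
  · exact Darc_nonempty (-6) (1) (1/2) (by norm_num) (by norm_num)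
      (by have h1 := Real.pi_gt_d6; have h2 := Real.pi_lt_d2; push_cast; linarith)
      (by have h1 := Real.pi_gt_d6; have h2 := Real.pi_lt_d2; push_cast; linarith)
  · exact Darc_nonempty (-7) (1) (1/10) (by norm_num) (by norm_num)
      (by have h1 := Real.pi_gt_d6; have h2 := Real.pi_lt_d2; push_cast; linarith)
      (by have h1 := Real.pi_gt_d6; have h2 := Real.pi_lt_d2; push_cast; linarith)
  · intro hsub
    have h6 := Darc_nonempty (-7) (1) (1/10) (by norm_num) (by norm_num)
      (by have h1 := Real.pi_gt_d6; have h2 := Real.pi_lt_d2; push_cast; linarith)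
      (by have h1 := Real.pi_gt_d6; have h2 := Real.pi_lt_d2; push_cast; linarith)
    obtain ⟨x, hx⟩ := Set.nonempty_iff_ne_empty.mpr h6
    have := hsub hx
    rw [show arcFamily.D (-3) = Darc (-3) from rfl, Darc_neg_three] at this
    exact this
  · rw [show arcFamily.D (-3) = Darc (-3) from rfl, Darc_neg_three]
    ext x; simp
  · exact Darc_nonempty (6) (-1) (1/2) (by norm_num) (by norm_num)
      (by have h1 := Real.pi_gt_d6; have h2 := Real.pi_lt_d2; push_cast; linarith)
      (by have h1 := Real.pi_gt_d6; have h2 := Real.pi_lt_d2; push_cast; linarith)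
  · exact Darc_nonempty (7) (-1) (4/5) (by norm_num) (by norm_num)
      (by have h1 := Real.pi_gt_d6; have h2 := Real.pi_lt_d2; push_cast; linarith)
      (by have h1 := Real.pi_gt_d6; have h2 := Real.pi_lt_d2; push_cast; linarith)
  · have h6 : (6:ℤ) ∈ {s : ℤ | 0 ≤ s ∧ arcFamily.D s ≠ ∅} :=
      ⟨by norm_num, Darc_nonempty 6 (-1) (1/2) (by norm_num) (by norm_num)
        (by have h1 := Real.pi_gt_d6; have h2 := Real.pi_lt_d2; push_cast; linarith)
        (by have h1 := Real.pi_gt_d6; have h2 := Real.pi_lt_d2; push_cast; linarith)⟩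
    have h7 : (7:ℤ) ∈ {s : ℤ | 0 ≤ s ∧ arcFamily.D s ≠ ∅} :=
      ⟨by norm_num, Darc_nonempty 7 (-1) (4/5) (by norm_num) (by norm_num)
        (by have h1 := Real.pi_gt_d6; have h2 := Real.pi_lt_d2; push_cast; linarith)
        (by have h1 := Real.pi_gt_d6; have h2 := Real.pi_lt_d2; push_cast; linarith)⟩
    have h1 : (1:ℤ) ∈ AddSubgroup.closure {s : ℤ | 0 ≤ s ∧ arcFamily.D s ≠ ∅} := by
      have := sub_mem (AddSubgroup.subset_closure h7) (AddSubgroup.subset_closure h6)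
      norm_num at this
      exact this
    rw [AddSubgroup.eq_top_iff']
    intro x
    have := AddSubgroup.zsmul_mem _ h1 x
    simpa using this


end
end

section
/- Let α be a free partial action of a countable subgroup G of (ℝ,+) on a second countable locally compact Hausdorff space X, and give 𝒢 the topology generated by the sets O_{t,U}. Then the inversion map (x,y) ↦ (y,x) is a homeomorphism of 𝒢 onto itself, and the multiplication map, defined on 𝒢² = {((x,y),(y′,z)) ∈ 𝒢 × 𝒢 : y = y′} (with the subspace topology from 𝒢 × 𝒢) by ((x,y),(y,z)) ↦ (x,z), is continuous; thus 𝒢 is a topological groupoid under these operations. -/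
namespace SigmaFamily

variable {G : Type*} [AddCommGroup G] {S : Set G} {X : Type*}

/-- The groupoid (equivalence relation) of a partial action:
`𝒢 = {(x, α_t x) : t, x ∈ X_{-t}}`. -/
def Gset (F : SigmaFamily G S X) : Set (X × X) :=
  {p | ∃ t ∈ S, p.1 ∈ F.D (-t) ∧ p.2 = F.act t p.1}

/-- The basic sets `O_{t,U} = {(x, α_t x) : x ∈ U}` (for `U ⊆ X_{-t}`). -/
def Oset (F : SigmaFamily G S X) (t : G) (U : Set X) : Set (X × X) :=
  {p | p.1 ∈ U ∧ p.2 = F.act t p.1}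

variable [TopologicalSpace X]

/-- The family of the sets `O_{t,U}` (`U ⊆ X_{-t}` open), viewed as subsets of `𝒢`. -/
def Bfam (F : SigmaFamily G S X) : Set (Set ↥(F.Gset)) :=
  {W | ∃ t ∈ S, ∃ U : Set X, IsOpen U ∧ U ⊆ F.D (-t) ∧
    W = Subtype.val ⁻¹' (F.Oset t U)}

/-- The topology on `𝒢`: the smallest topology in which all the `O_{t,U}` are open. -/
def tauG (F : SigmaFamily G S X) : TopologicalSpace ↥(F.Gset) :=
  TopologicalSpace.generateFrom F.Bfam

/-- Freeness of a partial action: `α_t x = x` implies `t = 0`. -/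
def IsFree (F : SigmaFamily G S X) : Prop :=
  ∀ t ∈ S, ∀ x ∈ F.D (-t), F.act t x = x → t = 0

end SigmaFamily

/-- The set of composable pairs `𝒢² = {((x,y),(y′,z)) : y = y′}`. -/
def CompPairs {G : Type*} [AddCommGroup G] {S : Set G} {X : Type*}
    (F : SigmaFamily G S X) : Set (↥F.Gset × ↥F.Gset) :=
  {q | (q.1 : X × X).2 = (q.2 : X × X).1}


section Aux

namespace SigmaFamily

variable {G : Type*} [AddCommGroup G] {X : Type*}
variable (F : SigmaFamily G (Set.univ : Set G) X)

lemma inv_act (h2 : F.Cond2) (t : G) (x : X) (hx : x ∈ F.D (-t)) :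
    F.act t x ∈ F.D t ∧ F.act (-t) (F.act t x) = x := by
  have hmem : x ∈ F.D (-t) ∩ F.D (-(-t + t)) := by
    refine ⟨hx, ?_⟩
    rw [show (-(-t + t) : G) = 0 by abel, F.D_zero]
    trivial
  obtain ⟨ha, hb⟩ := h2 (-t) trivial t trivial x hmem
  refine ⟨by simpa using ha, ?_⟩
  rw [show (-t + t : G) = 0 by abel, F.act_zero] at hb
  exact hb.symm

lemma trans_arrow (h1 : F.Cond1') (h2 : F.Cond2) {s t : G} {x y z : X}
    (hx : x ∈ F.D (-t)) (hy : y = F.act t x) (hys : y ∈ F.D (-s))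
    (hz : z = F.act s y) : x ∈ F.D (-(s + t)) ∧ z = F.act (s + t) x := by
  have hyt : y ∈ F.D t := hy ▸ (F.inv_act h2 t x hx).1
  have hxy : F.act (-t) y = x := by rw [hy]; exact (F.inv_act h2 t x hx).2
  have hA : x ∈ F.D (-(s + t)) := by
    have hsub := h1 (-t) trivial (-s) trivial
    have : x ∈ F.D (-t + -s) := by
      refine hsub ⟨y, ⟨by simpa using hyt, hys⟩, hxy⟩
    rwa [show (-t + -s : G) = -(s + t) by abel] at this
  refine ⟨hA, ?_⟩
  have := (h2 s trivial t trivial x ⟨hx, hA⟩).2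
  rw [this, ← hy]
  exact hz

lemma arrow_unique (h1 : F.Cond1') (h2 : F.Cond2) (hfree : F.IsFree)
    {r u : G} {x z : X} (hxr : x ∈ F.D (-r)) (hzr : z = F.act r x)
    (hxu : x ∈ F.D (-u)) (hzu : z = F.act u x) : r = u := by
  have hzDr : z ∈ F.D r := hzr ▸ (F.inv_act h2 r x hxr).1
  have hzDu : z ∈ F.D u := hzu ▸ (F.inv_act h2 u x hxu).1
  have hxzr : F.act (-r) z = x := by rw [hzr]; exact (F.inv_act h2 r x hxr).2
  have hxzu : F.act (-u) z = x := by rw [hzu]; exact (F.inv_act h2 u x hxu).2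
  have hxmem : x ∈ F.D (-(-u + r)) := by
    have hsub := h1 (-r) trivial u trivial
    have : x ∈ F.D (-r + u) := hsub ⟨z, ⟨by simpa using hzDr, hzDu⟩, hxzr⟩
    rwa [show (-r + u : G) = -(-u + r) by abel] at this
  have hfix : F.act (-u + r) x = x := by
    have hstep := (h2 (-u) trivial r trivial x ⟨hxr, hxmem⟩).2
    rw [hstep, ← hzr, hxzu]
  have h0 : -u + r = 0 := hfree (-u + r) trivial x hxmem hfix
  exact (neg_add_eq_zero.mp h0).symm

end SigmaFamily

end Aux

/-- for a free partial action of a countable subgroup `G` of `(ℝ,+)` on a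
second countable locally compact Hausdorff space `X`, with `𝒢` carrying the topology
generated by the sets `O_{t,U}`: inversion `(x,y) ↦ (y,x)` is a homeomorphism of `𝒢`
onto itself, and multiplication `((x,y),(y,z)) ↦ (x,z)`, defined on `𝒢²` with the
subspace topology from `𝒢 × 𝒢`, is continuous; thus `𝒢` is a topological groupoid. -/
theorem inversion_and_multiplication_continuous {X : Type*} [TopologicalSpace X]
    [SecondCountableTopology X] [LocallyCompactSpace X] [T2Space X]
    (G : AddSubgroup ℝ) [Countable ↥G]
    (F : SigmaFamily ↥G (Set.univ : Set ↥G) X) (h1 : F.Cond1') (h2 : F.Cond2)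
    (hopen : ∀ g : ↥G, IsOpen (F.D g))
    (hcont : ∀ g : ↥G, ContinuousOn (F.act g) (F.D (-g)))
    (hfree : F.IsFree) :
    (∃ e : ↥F.Gset ≃ ↥F.Gset,
      @Continuous ↥F.Gset ↥F.Gset F.tauG F.tauG e ∧
      @Continuous ↥F.Gset ↥F.Gset F.tauG F.tauG e.symm ∧
      ∀ p : ↥F.Gset, (e p : X × X) = ((p : X × X).2, (p : X × X).1)) ∧
    (∃ m : ↥(CompPairs F) → ↥F.Gset,
      @Continuous ↥(CompPairs F) ↥F.Gset
        (TopologicalSpace.induced Subtype.val (@instTopologicalSpaceProd _ _ F.tauG F.tauG))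
        F.tauG m ∧
      ∀ q : ↥(CompPairs F),
        (m q : X × X) = (((q : ↥F.Gset × ↥F.Gset).1 : X × X).1,
                         ((q : ↥F.Gset × ↥F.Gset).2 : X × X).2)) := by
  classical
  letI : TopologicalSpace ↥F.Gset := F.tauG
  letI : TopologicalSpace ↥(CompPairs F) :=
    TopologicalSpace.induced Subtype.val (@instTopologicalSpaceProd _ _ F.tauG F.tauG)
  have hswap : ∀ p : X × X, p ∈ F.Gset → ((p.2, p.1) : X × X) ∈ F.Gset := by
    rintro ⟨x, y⟩ ⟨t, -, hx, hy⟩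
    replace hx : x ∈ F.D (-t) := hx
    replace hy : y = F.act t x := hy
    refine ⟨-t, trivial, ?_, ?_⟩
    · show y ∈ F.D (-(-t))
      rw [neg_neg, hy]
      exact (F.inv_act h2 t x hx).1
    · show x = F.act (-t) y
      rw [hy]
      exact ((F.inv_act h2 t x hx).2).symm
  refine ⟨⟨⟨fun p => ⟨((p : X × X).2, (p : X × X).1), hswap _ p.2⟩,
      fun p => ⟨((p : X × X).2, (p : X × X).1), hswap _ p.2⟩,
      fun p => by apply Subtype.ext; simp,
      fun p => by apply Subtype.ext; simp⟩, ?_, ?_, fun p => rfl⟩, ?_⟩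
  case _ | _ =>
    show Continuous (fun p : ↥F.Gset => (⟨((p : X × X).2, (p : X × X).1), hswap _ p.2⟩ : ↥F.Gset))
    refine continuous_generateFrom_iff.mpr ?_
    rintro W ⟨t, -, U, hUopen, hUsub, rfl⟩
    have hWopen : IsOpen (F.D t ∩ F.act (-t) ⁻¹' U) := by
      have hc := hcont (-t)
      rw [neg_neg] at hc
      exact hc.isOpen_inter_preimage (hopen t) hUopen
    have hEq : (fun p : ↥F.Gset => (⟨((p : X × X).2, (p : X × X).1), hswap _ p.2⟩ : ↥F.Gset)) ⁻¹'
        (Subtype.val ⁻¹' F.Oset t U) =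
        Subtype.val ⁻¹' F.Oset (-t) (F.D t ∩ F.act (-t) ⁻¹' U) := by
      ext p
      obtain ⟨⟨x, y⟩, hp⟩ := p
      constructor
      · rintro ⟨hyU, hxy⟩
        replace hyU : y ∈ U := hyU
        replace hxy : x = F.act t y := hxy
        have hyD : y ∈ F.D (-t) := hUsub hyU
        refine ⟨⟨?_, ?_⟩, ?_⟩
        · show x ∈ F.D t
          rw [hxy]; exact (F.inv_act h2 t y hyD).1
        · show F.act (-t) x ∈ U
          rw [hxy, (F.inv_act h2 t y hyD).2]; exact hyU
        · show y = F.act (-t) x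
          rw [hxy, (F.inv_act h2 t y hyD).2]
      · rintro ⟨⟨hxD, hxU⟩, hyx⟩
        replace hxD : x ∈ F.D t := hxD
        replace hxU : F.act (-t) x ∈ U := hxU
        replace hyx : y = F.act (-t) x := hyx
        have hxD' : x ∈ F.D (-(-t)) := by simpa using hxD
        refine ⟨?_, ?_⟩
        · show y ∈ U
          rw [hyx]; exact hxU
        · show x = F.act t y
          rw [hyx]
          have h := (F.inv_act h2 (-t) x hxD').2
          rw [neg_neg] at h
          exact h.symm
    rw [hEq]
    exact TopologicalSpace.isOpen_generateFrom_of_mem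
      ⟨-t, trivial, F.D t ∩ F.act (-t) ⁻¹' U, hWopen,
        by rw [neg_neg]; exact Set.inter_subset_left, rfl⟩
  -- multiplication
  have hGm : ∀ q : ↥(CompPairs F),
      (((q : ↥F.Gset × ↥F.Gset).1 : X × X).1, ((q : ↥F.Gset × ↥F.Gset).2 : X × X).2) ∈ F.Gset := by
    rintro ⟨⟨⟨⟨x, y⟩, hp1⟩, ⟨⟨y', z⟩, hp2⟩⟩, hq⟩
    obtain ⟨t, -, hx, hy⟩ := hp1
    obtain ⟨s, -, hys, hz⟩ := hp2
    replace hq : y = y' := hq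
    subst hq
    replace hx : x ∈ F.D (-t) := hx
    replace hy : y = F.act t x := hy
    replace hys : y ∈ F.D (-s) := hys
    replace hz : z = F.act s y := hz
    obtain ⟨hA, hB⟩ := F.trans_arrow h1 h2 hx hy hys hz
    exact ⟨s + t, trivial, hA, hB⟩
  refine ⟨fun q => ⟨_, hGm q⟩, ?_, fun q => rfl⟩
  show Continuous (fun q : ↥(CompPairs F) => (⟨_, hGm q⟩ : ↥F.Gset))
  refine continuous_generateFrom_iff.mpr ?_
  rintro W ⟨r, -, U, hUopen, hUsub, rfl⟩
  rw [isOpen_iff_forall_mem_open]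
  rintro ⟨⟨⟨⟨x, y⟩, hp1⟩, ⟨⟨y', z⟩, hp2⟩⟩, hcmp⟩ hq
  obtain ⟨hxU, hzr⟩ : x ∈ U ∧ z = F.act r x := hq
  obtain ⟨t, -, hx, hy⟩ := hp1
  obtain ⟨s, -, hys, hz⟩ := hp2
  replace hcmp : y = y' := hcmp
  subst hcmp
  replace hx : x ∈ F.D (-t) := hx
  replace hy : y = F.act t x := hy
  replace hys : y ∈ F.D (-s) := hys
  replace hz : z = F.act s y := hz
  have hxr : x ∈ F.D (-r) := hUsub hxU
  obtain ⟨hA, hB⟩ := F.trans_arrow h1 h2 hx hy hys hz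
  have hr : r = s + t := F.arrow_unique h1 h2 hfree hxr hzr hA hB
  set V : Set X := U ∩ F.D (-t) ∩ F.D (-r) with hVdef
  have hVopen : IsOpen V := (hUopen.inter (hopen (-t))).inter (hopen (-r))
  set V' : Set X := (F.D t ∩ F.act (-t) ⁻¹' V) ∩ F.D (-s) with hV'def
  have hV'open : IsOpen V' := by
    have hc := hcont (-t)
    rw [neg_neg] at hc
    exact (hc.isOpen_inter_preimage (hopen t) hVopen).inter (hopen (-s))
  have hO1 : IsOpen (Subtype.val ⁻¹' F.Oset t V : Set ↥F.Gset) :=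
    TopologicalSpace.isOpen_generateFrom_of_mem
      ⟨t, trivial, V, hVopen, fun a ha => ha.1.2, rfl⟩
  have hO2 : IsOpen (Subtype.val ⁻¹' F.Oset s V' : Set ↥F.Gset) :=
    TopologicalSpace.isOpen_generateFrom_of_mem
      ⟨s, trivial, V', hV'open, fun a ha => ha.2, rfl⟩
  refine ⟨Subtype.val ⁻¹' ((Subtype.val ⁻¹' F.Oset t V) ×ˢ (Subtype.val ⁻¹' F.Oset s V')),
      ?_, ?_, ?_⟩
  · rintro ⟨⟨⟨⟨x1, w1⟩, hq1⟩, ⟨⟨w2, z1⟩, hq2⟩⟩, hc⟩ ⟨⟨hx1V, hw1⟩, ⟨hw2V', hz1⟩⟩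
    replace hc : w1 = w2 := hc
    subst hc
    replace hx1V : x1 ∈ V := hx1V
    replace hw1 : w1 = F.act t x1 := hw1
    replace hz1 : z1 = F.act s w1 := hz1
    refine ⟨?_, ?_⟩
    · show x1 ∈ U
      exact hx1V.1.1
    · show z1 = F.act r x1
      have hx1t : x1 ∈ F.D (-t) := hx1V.1.2
      have hx1r : x1 ∈ F.D (-(s + t)) := by rw [← hr]; exact hx1V.2
      rw [hr, (h2 s trivial t trivial x1 ⟨hx1t, hx1r⟩).2, ← hw1]
      exact hz1
  · exact (hO1.prod hO2).preimage continuous_induced_dom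
  · refine ⟨⟨?_, ?_⟩, ⟨?_, ?_⟩⟩
    · show x ∈ V
      refine ⟨⟨hxU, hx⟩, ?_⟩
      rw [hr]; exact hA
    · show y = F.act t x
      exact hy
    · show y ∈ V'
      refine ⟨⟨?_, ?_⟩, hys⟩
      · rw [hy]; exact (F.inv_act h2 t x hx).1
      · show F.act (-t) y ∈ V
        rw [hy, (F.inv_act h2 t x hx).2]
        refine ⟨⟨hxU, hx⟩, ?_⟩
        rw [hr]; exact hA
    · show z = F.act s y
      exact hz
end

section
/- Let α be a free partial action of a countable subgroup G of (ℝ,+) on a locally compact Hausdorff space X, and give 𝒢 the topology generated by the sets O_{t,U}. Then: (i) for each t ∈ G, the graph O_{t,X_{−t}} = {(x, α_t(x)) : x ∈ X_{−t}} is open in 𝒢, and the maps (x, α_t(x)) ↦ x and (x, α_t(x)) ↦ α_t(x), from this graph onto X_{−t} and X_t respectively, are homeomorphisms; (ii) 𝒢 is a locally compact Hausdorff space; (iii) the unit space {(x,x) : x ∈ X} is open in 𝒢 (so 𝒢 is r-discrete). -/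
namespace SigmaFamily

variable {G : Type*} [AddCommGroup G] {X : Type*}

section AuxAlg

variable (F : SigmaFamily G (Set.univ : Set G) X)

lemma cond2' (h2 : F.Cond2) (s t : G) {x : X} (hx1 : x ∈ F.D (-t))
    (hx2 : x ∈ F.D (-(s + t))) :
    F.act t x ∈ F.D (-s) ∧ F.act (s + t) x = F.act s (F.act t x) :=
  h2 s trivial t trivial x ⟨hx1, hx2⟩

lemma act_mem (t : G) {x : X} (hx : x ∈ F.D (-t)) : F.act t x ∈ F.D t :=
  F.mapsTo t trivial hx

lemma act_neg_mem (t : G) {y : X} (hy : y ∈ F.D t) : F.act (-t) y ∈ F.D (-t) :=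
  F.mapsTo (-t) trivial (show y ∈ F.D (-(-t)) by rwa [neg_neg])

lemma act_neg_act (h2 : F.Cond2) (t : G) {x : X} (hx : x ∈ F.D (-t)) :
    F.act (-t) (F.act t x) = x := by
  have h := (F.cond2' h2 (-t) t hx (by simp [F.D_zero])).2
  rw [neg_add_cancel, F.act_zero] at h
  exact h.symm

lemma act_act_neg (h2 : F.Cond2) (t : G) {y : X} (hy : y ∈ F.D t) :
    F.act t (F.act (-t) y) = y := by
  have := F.act_neg_act h2 (-t) (x := y) (by rwa [neg_neg])
  rwa [neg_neg] at this

lemma eq_of_act_eq (h2 : F.Cond2) (hfree : F.IsFree) {s t : G} {x : X}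
    (hs : x ∈ F.D (-s)) (ht : x ∈ F.D (-t)) (h : F.act s x = F.act t x) : s = t := by
  have hst : s - t + t = s := by abel
  have h' := F.cond2' h2 (s - t) t ht (by rw [hst]; exact hs)
  rw [hst] at h'
  have hfix : F.act (s - t) (F.act t x) = F.act t x := by rw [← h'.2, h]
  have h0 := hfree (s - t) trivial _ h'.1 hfix
  rw [sub_eq_zero] at h0
  exact h0

end AuxAlg

section AuxTop

variable [TopologicalSpace X] (F : SigmaFamily G (Set.univ : Set G) X)

lemma mem_Bfam (t : G) {U : Set X} (hU : IsOpen U) (hsub : U ⊆ F.D (-t)) :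
    (Subtype.val ⁻¹' (F.Oset t U) : Set ↥F.Gset) ∈ F.Bfam :=
  ⟨t, trivial, U, hU, hsub, rfl⟩

lemma isOpen_basic (t : G) {U : Set X} (hU : IsOpen U) (hsub : U ⊆ F.D (-t)) :
    @IsOpen _ F.tauG (Subtype.val ⁻¹' (F.Oset t U) : Set ↥F.Gset) :=
  TopologicalSpace.isOpen_generateFrom_of_mem (F.mem_Bfam t hU hsub)

lemma isBasis (h2 : F.Cond2) (hfree : F.IsFree) (hopen : ∀ g : G, IsOpen (F.D g)) :
    @TopologicalSpace.IsTopologicalBasis ↥F.Gset F.tauG F.Bfam := by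
  letI := F.tauG
  refine ⟨?_, ?_, rfl⟩
  · rintro W1 ⟨s, -, U, hUo, hUs, rfl⟩ W2 ⟨t, -, V, hVo, hVs, rfl⟩ p hp
    obtain ⟨⟨hpU, hpUe⟩, ⟨hpV, hpVe⟩⟩ := hp
    have hst : s = t := F.eq_of_act_eq h2 hfree (hUs hpU) (hVs hpV) (hpUe.symm.trans hpVe)
    subst hst
    refine ⟨Subtype.val ⁻¹' (F.Oset s (U ∩ V)),
      F.mem_Bfam s (hUo.inter hVo) (fun x hx => hUs hx.1), ⟨⟨hpU, hpV⟩, hpUe⟩, ?_⟩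
    rintro q ⟨⟨hq1, hq2⟩, hqe⟩
    exact ⟨⟨hq1, hqe⟩, ⟨hq2, hqe⟩⟩
  · apply Set.eq_univ_iff_forall.mpr
    intro p
    obtain ⟨t, -, h1, heq⟩ := p.prop
    exact Set.mem_sUnion.mpr ⟨_, F.mem_Bfam t (hopen (-t)) subset_rfl, h1, heq⟩

lemma continuous_val (hopen : ∀ g : G, IsOpen (F.D g))
    (hcont : ∀ g : G, ContinuousOn (F.act g) (F.D (-g))) :
    @Continuous ↥F.Gset (X × X) F.tauG _ Subtype.val := by
  letI := F.tauG
  rw [continuous_def]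
  intro W hW
  rw [isOpen_iff_forall_mem_open]
  intro p hp
  obtain ⟨t, -, h1, heq⟩ := p.prop
  obtain ⟨A, B, hA, hB, hpA, hpB, hABW⟩ := isOpen_prod_iff.mp hW p.val.1 p.val.2 hp
  have hUo : IsOpen (A ∩ (F.D (-t) ∩ F.act t ⁻¹' B)) :=
    hA.inter ((hcont t).isOpen_inter_preimage (hopen (-t)) hB)
  refine ⟨Subtype.val ⁻¹' (F.Oset t (A ∩ (F.D (-t) ∩ F.act t ⁻¹' B))), ?_, ?_, ?_⟩
  · rintro q ⟨⟨hq1, -, hq3⟩, hqe⟩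
    exact hABW (Set.mk_mem_prod hq1 (by rw [hqe]; exact hq3))
  · exact F.isOpen_basic t hUo (fun x hx => hx.2.1)
  · exact ⟨⟨hpA, h1, show F.act t p.val.1 ∈ B from heq ▸ hpB⟩, heq⟩

/-- The map `x ↦ (x, α_t x)` from `X_{-t}` into `𝒢`. -/
def jmap (t : G) (x : ↥(F.D (-t))) : ↥F.Gset :=
  ⟨(x.val, F.act t x.val), ⟨t, trivial, x.prop, rfl⟩⟩

lemma continuous_jmap (h2 : F.Cond2) (hfree : F.IsFree) (t : G) :
    @Continuous ↥(F.D (-t)) ↥F.Gset _ F.tauG (F.jmap t) := by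
  show @Continuous _ _ _ (TopologicalSpace.generateFrom F.Bfam) (F.jmap t)
  rw [continuous_generateFrom_iff]
  rintro W ⟨s, -, U, hUo, hUs, rfl⟩
  by_cases hst : s = t
  · have hE : F.jmap t ⁻¹' (Subtype.val ⁻¹' (F.Oset s U)) = Subtype.val ⁻¹' U := by
      ext x
      exact ⟨fun h => h.1, fun h => ⟨h, by rw [hst]; exact rfl⟩⟩
    rw [hE]
    exact hUo.preimage continuous_subtype_val
  · have hE : F.jmap t ⁻¹' (Subtype.val ⁻¹' (F.Oset s U)) = ∅ := by
      ext x
      simp only [Set.mem_empty_iff_false, iff_false]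
      rintro ⟨hxU, hxe⟩
      exact hst (F.eq_of_act_eq h2 hfree (hUs hxU) x.prop hxe.symm)
    rw [hE]
    exact isOpen_empty

/-- The map `y ↦ (α_{-t} y, y)` from `X_t` into `𝒢`. -/
def jmap' (h2 : F.Cond2) (t : G) (y : ↥(F.D t)) : ↥F.Gset :=
  ⟨(F.act (-t) y.val, y.val),
    ⟨t, trivial, F.act_neg_mem t y.prop, (F.act_act_neg h2 t y.prop).symm⟩⟩

lemma continuous_jmap' (h2 : F.Cond2) (hfree : F.IsFree) (hopen : ∀ g : G, IsOpen (F.D g))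
    (hcont : ∀ g : G, ContinuousOn (F.act g) (F.D (-g))) (t : G) :
    @Continuous ↥(F.D t) ↥F.Gset _ F.tauG (F.jmap' h2 t) := by
  show @Continuous _ _ _ (TopologicalSpace.generateFrom F.Bfam) (F.jmap' h2 t)
  rw [continuous_generateFrom_iff]
  rintro W ⟨s, -, U, hUo, hUs, rfl⟩
  by_cases hst : s = t
  · have hE : F.jmap' h2 t ⁻¹' (Subtype.val ⁻¹' (F.Oset s U)) =
        Subtype.val ⁻¹' (F.D t ∩ F.act (-t) ⁻¹' U) := by
      ext y
      constructor
      · rintro ⟨hyU, -⟩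
        exact ⟨y.prop, hyU⟩
      · rintro ⟨-, hyU⟩
        exact ⟨hyU, by rw [hst]; exact (F.act_act_neg h2 t y.prop).symm⟩
    rw [hE]
    have hcg : ContinuousOn (F.act (-t)) (F.D t) := by
      have := hcont (-t); rwa [neg_neg] at this
    exact (hcg.isOpen_inter_preimage (hopen t) hUo).preimage continuous_subtype_val
  · have hE : F.jmap' h2 t ⁻¹' (Subtype.val ⁻¹' (F.Oset s U)) = ∅ := by
      ext y
      simp only [Set.mem_empty_iff_false, iff_false]
      rintro ⟨hyU, hye⟩
      exact hst (F.eq_of_act_eq h2 hfree (hUs hyU) (F.act_neg_mem t y.prop)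
        (hye.symm.trans (F.act_act_neg h2 t y.prop).symm))
    rw [hE]
    exact isOpen_empty

end AuxTop

end SigmaFamily

/-- for a free partial action of a countable subgroup `G` of `(ℝ,+)` on a
locally compact Hausdorff space `X`, with `𝒢` carrying the topology generated by the
sets `O_{t,U}`: (i) each graph `{(x, α_t x) : x ∈ X_{-t}}` is open in `𝒢` and the range
and domain maps `(x, α_t x) ↦ x` and `(x, α_t x) ↦ α_t x` are homeomorphisms of the
graph onto `X_{-t}` and `X_t` respectively; (ii) `𝒢` is locally compact Hausdorff;
(iii) the unit space `{(x,x) : x ∈ X}` is open in `𝒢` (so `𝒢` is `r`-discrete). -/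
theorem groupoid_locallyCompact_rDiscrete {X : Type*} [TopologicalSpace X]
    [LocallyCompactSpace X] [T2Space X]
    (G : AddSubgroup ℝ) [Countable ↥G]
    (F : SigmaFamily ↥G (Set.univ : Set ↥G) X) (h1 : F.Cond1') (h2 : F.Cond2)
    (hopen : ∀ g : ↥G, IsOpen (F.D g))
    (hcont : ∀ g : ↥G, ContinuousOn (F.act g) (F.D (-g)))
    (hfree : F.IsFree) :
    (∀ t : ↥G, @IsOpen ↥F.Gset F.tauG {p : ↥F.Gset | p.val ∈ F.Oset t (F.D (-t))}) ∧
    (∀ t : ↥G,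
      ∃ e : ↥{p : ↥F.Gset | p.val ∈ F.Oset t (F.D (-t))} ≃ ↥(F.D (-t)),
        @Continuous _ _ (TopologicalSpace.induced Subtype.val F.tauG)
          (inferInstance : TopologicalSpace ↥(F.D (-t))) e ∧
        @Continuous _ _ (inferInstance : TopologicalSpace ↥(F.D (-t)))
          (TopologicalSpace.induced Subtype.val F.tauG) e.symm ∧
        ∀ p, (e p : X) = (p.val.val).1) ∧
    (∀ t : ↥G,
      ∃ e : ↥{p : ↥F.Gset | p.val ∈ F.Oset t (F.D (-t))} ≃ ↥(F.D t),
        @Continuous _ _ (TopologicalSpace.induced Subtype.val F.tauG)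
          (inferInstance : TopologicalSpace ↥(F.D t)) e ∧
        @Continuous _ _ (inferInstance : TopologicalSpace ↥(F.D t))
          (TopologicalSpace.induced Subtype.val F.tauG) e.symm ∧
        ∀ p, (e p : X) = (p.val.val).2) ∧
    @LocallyCompactSpace ↥F.Gset F.tauG ∧
    @T2Space ↥F.Gset F.tauG ∧
    @IsOpen ↥F.Gset F.tauG {p : ↥F.Gset | (p.val).1 = (p.val).2} := by
  classical
  letI := F.tauG
  have hval : Continuous (Subtype.val : ↥F.Gset → X × X) := F.continuous_val hopen hcont
  have hbasis := F.isBasis h2 hfree hopen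
  refine ⟨?_, ?_, ?_, ?_, ?_, ?_⟩
  · -- (i) each graph is open
    intro t
    exact F.isOpen_basic t (hopen (-t)) subset_rfl
  · -- (ii) range map homeomorphism onto `X_{-t}`
    intro t
    refine ⟨{ toFun := fun p => ⟨p.val.val.1, p.prop.1⟩
              invFun := fun x => ⟨F.jmap t x, x.prop, rfl⟩
              left_inv := fun p => by
                apply Subtype.ext; apply Subtype.ext
                exact Prod.ext rfl p.prop.2.symm
              right_inv := fun x => rfl }, ?_, ?_, fun p => rfl⟩
    · exact Continuous.subtype_mk
        (continuous_fst.comp (hval.comp continuous_subtype_val)) _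
    · exact Continuous.subtype_mk (F.continuous_jmap h2 hfree t) _
  · -- (ii) domain map homeomorphism onto `X_t`
    intro t
    refine ⟨{ toFun := fun p => ⟨p.val.val.2, by
                rw [p.prop.2]; exact F.act_mem t p.prop.1⟩
              invFun := fun y => ⟨F.jmap' h2 t y,
                F.act_neg_mem t y.prop, (F.act_act_neg h2 t y.prop).symm⟩
              left_inv := fun p => by
                apply Subtype.ext; apply Subtype.ext
                refine Prod.ext ?_ rfl
                show F.act (-t) p.val.val.2 = p.val.val.1
                rw [p.prop.2]
                exact F.act_neg_act h2 t p.prop.1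
              right_inv := fun y => rfl }, ?_, ?_, fun p => rfl⟩
    · exact Continuous.subtype_mk
        (continuous_snd.comp (hval.comp continuous_subtype_val)) _
    · exact Continuous.subtype_mk (F.continuous_jmap' h2 hfree hopen hcont t) _
  · -- (ii) local compactness
    refine ⟨fun p n hn => ?_⟩
    obtain ⟨W, hWB, hpW, hWn⟩ := hbasis.mem_nhds_iff.mp hn
    obtain ⟨s, -, U, hUo, hUsub, rfl⟩ := hWB
    obtain ⟨hp1, hp2⟩ := hpW
    obtain ⟨K, hKn, hKsub, hKc⟩ := local_compact_nhds (hUo.mem_nhds hp1)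
    have hKD : K ⊆ F.D (-s) := hKsub.trans hUsub
    refine ⟨Subtype.val ⁻¹' (F.Oset s K), ?_, ?_, ?_⟩
    · refine Filter.mem_of_superset
        ((F.isOpen_basic s isOpen_interior
          ((interior_subset.trans hKD))).mem_nhds
          (⟨mem_interior_iff_mem_nhds.mpr hKn, hp2⟩ :
            p ∈ Subtype.val ⁻¹' (F.Oset s (interior K)))) ?_
      rintro q ⟨hq1, hq2⟩
      exact ⟨interior_subset hq1, hq2⟩
    · rintro q ⟨hq1, hq2⟩
      exact hWn ⟨hKsub hq1, hq2⟩
    · have hEq : Subtype.val ⁻¹' (F.Oset s K) =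
          F.jmap s '' (Subtype.val ⁻¹' K : Set ↥(F.D (-s))) := by
        ext q
        constructor
        · rintro ⟨hq1, hq2⟩
          exact ⟨⟨q.val.1, hKD hq1⟩, hq1,
            Subtype.ext (Prod.ext rfl hq2.symm)⟩
        · rintro ⟨x, hx, rfl⟩
          exact ⟨hx, rfl⟩
      rw [hEq]
      have hKc' : IsCompact (Subtype.val ⁻¹' K : Set ↥(F.D (-s))) := by
        rw [Subtype.isCompact_iff, Subtype.image_preimage_coe,
          Set.inter_eq_self_of_subset_right hKD]
        exact hKc
      exact hKc'.image (F.continuous_jmap h2 hfree s)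
  · -- (ii) Hausdorff
    exact @T2Space.of_injective_continuous _ _ _ _ _ _ Subtype.val_injective hval
  · -- (iii) unit space is open
    have hEq : {p : ↥F.Gset | (p.val).1 = (p.val).2} =
        Subtype.val ⁻¹' (F.Oset 0 Set.univ) := by
      ext p
      constructor
      · intro h
        exact ⟨Set.mem_univ _, by rw [F.act_zero]; exact h.symm⟩
      · intro h
        have h' := h.2
        rw [F.act_zero] at h'
        exact h'.symm
    rw [hEq]
    exact F.isOpen_basic 0 isOpen_univ (by rw [neg_zero, F.D_zero])
end

section
/- Let (X_i, φ_i)_{i∈ℕ} be an inverse system of locally compact Hausdorff spaces in which each φ_i : X_{i+1} → X_i is a continuous proper surjection (preimages of compact sets are compact). Let X = {(x_i) ∈ ∏_i X_i : φ_i(x_{i+1}) = x_i for all i} with the subspace topology, and let π_i : X → X_i be the coordinate projections. Then: (i) for every f ∈ C₀(X_i), the function f ∘ π_i belongs to C₀(X), and F_i := {f ∘ π_i : f ∈ C₀(X_i)} satisfies F_i ⊆ F_{i+1}; (ii) the union ⋃_i F_i is a *-subalgebra of C₀(X) which separates the points of X; (iii) ⋃_i F_i is dense in C₀(X) with respect to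 the uniform norm. -/
open scoped ZeroAtInfty

/-- The inverse limit of the system `(Xᵢ, φᵢ)`. -/
abbrev InvLim (X : ℕ → Type*) (φ : ∀ i, X (i + 1) → X i) : Type _ :=
  {x : ∀ i, X i // ∀ i, φ i (x (i + 1)) = x i}

/-- `Fᵢ = {f ∘ πᵢ : f ∈ C₀(Xᵢ)}`, viewed inside `C₀(X)` for the inverse limit `X`. -/
def Fc (X : ℕ → Type*) [∀ i, TopologicalSpace (X i)] (φ : ∀ i, X (i + 1) → X i)
    (i : ℕ) : Set C₀(InvLim X φ, ℂ) :=
  {g | ∃ f : C₀(X i, ℂ), ⇑g = ⇑f ∘ (fun x : InvLim X φ => x.val i)}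

/-!
The projections `πᵢ : X → Xᵢ` are proper: `π₀⁻¹ K` is a closed subset of the compact set `∏ⱼ Kⱼ`,
where `K₀ = K` and `Kⱼ₊₁ = φⱼ⁻¹ Kⱼ`, and `πᵢ₊₁⁻¹ K` is closed in `πᵢ⁻¹ (φᵢ K)`. Hence
`f ↦ f ∘ πᵢ` is a `*`-homomorphism `C₀(Xᵢ) → C₀(X)`. Its ranges `Fᵢ` increase because
`πᵢ = φᵢ ∘ πᵢ₊₁`, so their union is a `*`-subalgebra; it separates points since distinct threads
differ in some coordinate, where Urysohn's lemma applies.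

Density is Stone–Weierstrass for `C₀(Y)`, reduced to the compact case on the one-point
compactification: extension by zero embeds `C₀(Y)` isometrically into the kernel of evaluation
at `∞`, the unital `*`-algebra generated by a point-separating, nowhere-vanishing `A` is dense in
`C(OnePoint Y)`, and its elements vanishing at `∞` are exactly those of `A`, so `A` is dense in that
kernel.
-/

open Filter Topology Set OnePoint

namespace ZeroAtInftyContinuousMap

variable {𝕜 : Type*} [RCLike 𝕜] {Y : Type*} [TopologicalSpace Y]

def compNonUnitalStarAlgHom {β γ : Type*} [TopologicalSpace β] [TopologicalSpace γ]
    (g : CocompactMap β γ) : C₀(γ, 𝕜) →⋆ₙₐ[𝕜] C₀(β, 𝕜) :=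
  { compNonUnitalAlgHom g with map_star' := fun _ => rfl }

lemma exists_apply_eq_one_eqOn_zero [RegularSpace Y] [LocallyCompactSpace Y] (a : Y)
    {t : Set Y} (ht : IsClosed t) (ha : a ∉ t) :
    ∃ f : C₀(Y, 𝕜), f a = 1 ∧ EqOn f 0 t := by
  obtain ⟨f, hf1, hf0, hfc, -⟩ := exists_continuous_one_zero_of_isCompact isCompact_singleton ht
    (disjoint_singleton_left.mpr ha)
  let g : C(Y, 𝕜) := (⟨RCLike.ofReal, RCLike.continuous_ofReal⟩ : C(ℝ, 𝕜)).comp f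
  refine ⟨⟨g, (hfc.comp_left RCLike.ofReal_zero).is_zero_at_infty⟩, ?_, fun y hy => ?_⟩
  · change ((f a : ℝ) : 𝕜) = 1
    simp [hf1 rfl]
  · change ((f y : ℝ) : 𝕜) = 0
    simp [hf0 hy]

section OnePointExtension

variable [R1Space Y]

def toOnePoint : C₀(Y, 𝕜) →⋆ₙₐ[𝕜] C(OnePoint Y, 𝕜) where
  toFun g := continuousMapMk g 0 (coclosedCompact_eq_cocompact (X := Y) ▸ zero_at_infty g)
  map_smul' c g := by ext z; induction z using OnePoint.rec <;> simp [continuousMapMk]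
  map_zero' := by ext z; induction z using OnePoint.rec <;> simp [continuousMapMk]
  map_add' g h := by ext z; induction z using OnePoint.rec <;> simp [continuousMapMk]
  map_mul' g h := by ext z; induction z using OnePoint.rec <;> simp [continuousMapMk]
  map_star' g := by ext z; induction z using OnePoint.rec <;> simp [continuousMapMk]

@[simp] lemma toOnePoint_coe (g : C₀(Y, 𝕜)) (y : Y) : toOnePoint g y = g y := rfl

@[simp] lemma toOnePoint_infty (g : C₀(Y, 𝕜)) : toOnePoint g ∞ = 0 := rfl

lemma norm_toOnePoint (g : C₀(Y, 𝕜)) : ‖toOnePoint g‖ = ‖g‖ := by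
  refine le_antisymm ((ContinuousMap.norm_le _ (norm_nonneg g)).2 fun z => ?_) ?_
  · induction z using OnePoint.rec with
    | infty => simp
    | coe y => simpa [← norm_toBCF_eq_norm] using g.toBCF.norm_coe_le_norm y
  · rw [← norm_toBCF_eq_norm]
    refine (BoundedContinuousFunction.norm_le (norm_nonneg _)).2 fun y => ?_
    simpa using (toOnePoint g).norm_coe_le_norm (y : OnePoint Y)

lemma isometry_toOnePoint : Isometry (toOnePoint : C₀(Y, 𝕜) → C(OnePoint Y, 𝕜)) :=
  AddMonoidHomClass.isometry_of_norm toOnePoint norm_toOnePoint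

variable {A : NonUnitalStarSubalgebra 𝕜 C₀(Y, 𝕜)}

lemma separatesPoints_adjoin_map_toOnePoint
    (hsep : ∀ ⦃x y : Y⦄, x ≠ y → ∃ f ∈ A, f x ≠ f y) (hnv : ∀ x, ∃ f ∈ A, f x ≠ 0) :
    (StarAlgebra.adjoin 𝕜 (A.map toOnePoint : Set C(OnePoint Y, 𝕜))).SeparatesPoints := by
  suffices ∀ ⦃z w : OnePoint Y⦄, z ≠ w → ∃ f ∈ A, toOnePoint f z ≠ toOnePoint f w by
    intro z w hzw
    obtain ⟨f, hf, h⟩ := this hzw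
    exact ⟨_, ⟨toOnePoint f, StarAlgebra.subset_adjoin _ _ ⟨f, hf, rfl⟩, rfl⟩, h⟩
  intro z w hzw
  induction z using OnePoint.rec <;> induction w using OnePoint.rec
  case infty.infty => exact absurd rfl hzw
  case infty.coe w =>
    obtain ⟨f, hf, h⟩ := hnv w
    exact ⟨f, hf, by simpa using h.symm⟩
  case coe.infty z =>
    obtain ⟨f, hf, h⟩ := hnv z
    exact ⟨f, hf, by simpa using h⟩
  case coe.coe z w =>
    obtain ⟨f, hf, h⟩ := hsep (fun h => hzw (congrArg _ h))
    exact ⟨f, hf, by simpa using h⟩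

/-- The unital star algebra generated by `A` consists of the functions `c + a` with `a ∈ A`. -/
lemma adjoin_map_toOnePoint_inter_ker_subset :
    (StarAlgebra.adjoin 𝕜 (A.map toOnePoint : Set C(OnePoint Y, 𝕜)) : Set C(OnePoint Y, 𝕜))
      ∩ RingHom.ker (ContinuousMap.evalStarAlgHom 𝕜 𝕜 (∞ : OnePoint Y))
      ⊆ toOnePoint '' A := by
  rintro u ⟨hu, hu_infty⟩
  obtain ⟨⟨c, a⟩, rfl⟩ := (NonUnitalStarSubalgebra.unitization_range _).ge hu
  obtain ⟨f, hf, hfa⟩ := a.2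
  replace hfa : toOnePoint f = a := hfa
  have hc : c = 0 := by simpa [← hfa, RingHom.mem_ker] using hu_infty
  exact ⟨f, hf, by simp [hc, hfa]⟩

theorem dense_of_separatesPoints (hsep : ∀ ⦃x y : Y⦄, x ≠ y → ∃ f ∈ A, f x ≠ f y)
    (hnv : ∀ x, ∃ f ∈ A, f x ≠ 0) : Dense (A : Set C₀(Y, 𝕜)) := by
  have hB := ContinuousMap.starSubalgebra_topologicalClosure_eq_top_of_separatesPoints _
    (separatesPoints_adjoin_map_toOnePoint hsep hnv)
  intro g
  rw [isometry_toOnePoint.isEmbedding.closure_eq_preimage_closure_image]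
  refine closure_mono adjoin_map_toOnePoint_inter_ker_subset ?_
  rw [ContinuousMap.AlgHom.closure_ker_inter _ (continuous_eval_const _),
    ← StarSubalgebra.topologicalClosure_coe, hB]
  exact ⟨trivial, by simp [RingHom.mem_ker]⟩

end OnePointExtension

end ZeroAtInftyContinuousMap

namespace InvLim

variable {X : ℕ → Type*} {φ : ∀ i, X (i + 1) → X i}

variable (φ) in
def preimageTower (K : Set (X 0)) : ∀ j, Set (X j)
  | 0 => K
  | j + 1 => φ j ⁻¹' preimageTower K j

lemma val_mem_preimageTower {K : Set (X 0)} (x : InvLim X φ) (hx : x.val 0 ∈ K) :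
    ∀ j, x.val j ∈ preimageTower φ K j
  | 0 => hx
  | j + 1 => by
    change φ j (x.val (j + 1)) ∈ preimageTower φ K j
    rw [x.2 j]
    exact val_mem_preimageTower x hx j

variable [∀ i, TopologicalSpace (X i)]

lemma continuous_proj (i : ℕ) : Continuous fun x : InvLim X φ => x.val i :=
  (continuous_apply i).comp continuous_subtype_val

lemma isClosed_range_val [∀ i, T2Space (X i)] (hφc : ∀ i, Continuous (φ i)) :
    IsClosed (range (Subtype.val : InvLim X φ → ∀ i, X i)) := by
  rw [Subtype.range_coe_subtype, ofPred_forall]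
  exact isClosed_iInter fun i =>
    isClosed_eq ((hφc i).comp (continuous_apply _)) (continuous_apply i)

lemma isCompact_preimageTower
    (hφp : ∀ i (K : Set (X i)), IsCompact K → IsCompact (φ i ⁻¹' K))
    {K : Set (X 0)} (hK : IsCompact K) : ∀ j, IsCompact (preimageTower φ K j)
  | 0 => hK
  | j + 1 => hφp j _ (isCompact_preimageTower hφp hK j)

lemma isCompact_preimage_proj [∀ i, T2Space (X i)] (hφc : ∀ i, Continuous (φ i))
    (hφp : ∀ i (K : Set (X i)), IsCompact K → IsCompact (φ i ⁻¹' K))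
    (i : ℕ) {K : Set (X i)} (hK : IsCompact K) :
    IsCompact ((fun x : InvLim X φ => x.val i) ⁻¹' K) := by
  induction i with
  | zero =>
    have hT : IsCompact ((↑) ⁻¹' univ.pi (preimageTower φ K) : Set (InvLim X φ)) :=
      IsInducing.subtypeVal.isCompact_preimage (isClosed_range_val hφc)
        (isCompact_univ_pi (isCompact_preimageTower hφp hK))
    exact hT.of_isClosed_subset (hK.isClosed.preimage (continuous_proj 0))
      fun x hx => mem_univ_pi.2 (val_mem_preimageTower x hx)
  | succ i ih =>
    refine (ih (hK.image (hφc i))).of_isClosed_subset (hK.isClosed.preimage (continuous_proj _)) ?_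
    exact fun x hx => ⟨x.val (i + 1), hx, x.2 i⟩

def projCocompact [∀ i, T2Space (X i)] (hφc : ∀ i, Continuous (φ i))
    (hφp : ∀ i (K : Set (X i)), IsCompact K → IsCompact (φ i ⁻¹' K)) (i : ℕ) :
    CocompactMap (InvLim X φ) (X i) :=
  ⟨⟨fun x => x.val i, continuous_proj i⟩,
    CocompactMap.tendsto_of_forall_preimage fun _ => isCompact_preimage_proj hφc hφp i⟩

end InvLim

section Pullback

open ZeroAtInftyContinuousMap InvLim

variable {X : ℕ → Type*} [∀ i, TopologicalSpace (X i)] {φ : ∀ i, X (i + 1) → X i}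

lemma Fc_subset_succ (hφc : ∀ i, Continuous (φ i))
    (hφp : ∀ i (K : Set (X i)), IsCompact K → IsCompact (φ i ⁻¹' K)) (i : ℕ) :
    Fc X φ i ⊆ Fc X φ (i + 1) := by
  rintro g ⟨f, hf⟩
  refine ⟨f.comp ⟨⟨φ i, hφc i⟩, CocompactMap.tendsto_of_forall_preimage (hφp i)⟩, ?_⟩
  rw [hf]
  funext x
  exact congrArg f (x.2 i).symm

variable [∀ i, T2Space (X i)]

lemma Fc_eq_range (hφc : ∀ i, Continuous (φ i))
    (hφp : ∀ i (K : Set (X i)), IsCompact K → IsCompact (φ i ⁻¹' K)) (i : ℕ) :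
    Fc X φ i =
      NonUnitalStarAlgHom.range (compNonUnitalStarAlgHom (𝕜 := ℂ) (projCocompact hφc hφp i)) := by
  ext g
  exact exists_congr fun f => ⟨fun h => DFunLike.ext' h.symm, fun h => h ▸ rfl⟩

lemma exists_nonUnitalStarSubalgebra_coe_eq_iUnion_Fc (hφc : ∀ i, Continuous (φ i))
    (hφp : ∀ i (K : Set (X i)), IsCompact K → IsCompact (φ i ⁻¹' K)) :
    ∃ S : NonUnitalStarSubalgebra ℂ C₀(InvLim X φ, ℂ),
      (S : Set C₀(InvLim X φ, ℂ)) = ⋃ i, Fc X φ i := by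
  have hmono : Monotone fun i => NonUnitalStarAlgHom.range
      (compNonUnitalStarAlgHom (𝕜 := ℂ) (projCocompact hφc hφp i)) := by
    refine monotone_nat_of_le_succ fun i => ?_
    rw [← SetLike.coe_subset_coe, ← Fc_eq_range hφc hφp, ← Fc_eq_range hφc hφp]
    exact Fc_subset_succ hφc hφp i
  refine ⟨_, NonUnitalStarSubalgebra.coe_iSup_of_directed hmono.directed_le |>.trans ?_⟩
  simp only [Fc_eq_range hφc hφp]

lemma exists_mem_iUnion_Fc_apply_ne [∀ i, LocallyCompactSpace (X i)]
    (hφc : ∀ i, Continuous (φ i))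
    (hφp : ∀ i (K : Set (X i)), IsCompact K → IsCompact (φ i ⁻¹' K)) {x y : InvLim X φ}
    (hxy : x ≠ y) : ∃ g ∈ ⋃ i, Fc X φ i, g x ≠ g y := by
  obtain ⟨i, hi⟩ : ∃ i, x.val i ≠ y.val i := by
    by_contra! h
    exact hxy (Subtype.ext (funext h))
  obtain ⟨f, hf1, hf0⟩ :=
    exists_apply_eq_one_eqOn_zero (𝕜 := ℂ) (x.val i) isClosed_singleton hi
  refine ⟨f.comp (projCocompact hφc hφp i), mem_iUnion.2 ⟨i, f, rfl⟩, ?_⟩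
  change f (x.val i) ≠ f (y.val i)
  rw [hf1, hf0 rfl]
  exact one_ne_zero

lemma exists_mem_iUnion_Fc_apply_ne_zero [∀ i, LocallyCompactSpace (X i)]
    (hφc : ∀ i, Continuous (φ i))
    (hφp : ∀ i (K : Set (X i)), IsCompact K → IsCompact (φ i ⁻¹' K)) (x : InvLim X φ) :
    ∃ g ∈ ⋃ i, Fc X φ i, g x ≠ 0 := by
  obtain ⟨f, hf1, -⟩ := exists_apply_eq_one_eqOn_zero (𝕜 := ℂ) (x.val 0) isClosed_empty
    (notMem_empty _)
  refine ⟨f.comp (projCocompact hφc hφp 0), mem_iUnion.2 ⟨0, f, rfl⟩, ?_⟩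
  change f (x.val 0) ≠ 0
  rw [hf1]
  exact one_ne_zero

end Pullback

theorem invLim_C0_dense_general (X : ℕ → Type*) [∀ i, TopologicalSpace (X i)]
    [∀ i, LocallyCompactSpace (X i)] [∀ i, T2Space (X i)]
    (φ : ∀ i, X (i + 1) → X i)
    (hφc : ∀ i, Continuous (φ i))
    (hφp : ∀ i (K : Set (X i)), IsCompact K → IsCompact (φ i ⁻¹' K)) :
    (∀ i (f : C₀(X i, ℂ)), ∃ g : C₀(InvLim X φ, ℂ),
      ⇑g = ⇑f ∘ (fun x : InvLim X φ => x.val i)) ∧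
    (∀ i, Fc X φ i ⊆ Fc X φ (i + 1)) ∧
    ((0 : C₀(InvLim X φ, ℂ)) ∈ ⋃ i, Fc X φ i) ∧
    (∀ g ∈ ⋃ i, Fc X φ i, ∀ h ∈ ⋃ i, Fc X φ i,
      g + h ∈ ⋃ i, Fc X φ i ∧ g * h ∈ ⋃ i, Fc X φ i) ∧
    (∀ g ∈ ⋃ i, Fc X φ i, star g ∈ ⋃ i, Fc X φ i ∧ ∀ c : ℂ, c • g ∈ ⋃ i, Fc X φ i) ∧
    (∀ x y : InvLim X φ, x ≠ y → ∃ g ∈ ⋃ i, Fc X φ i, g x ≠ g y) ∧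
    Dense (⋃ i, Fc X φ i) := by
  obtain ⟨S, hS⟩ := exists_nonUnitalStarSubalgebra_coe_eq_iUnion_Fc hφc hφp
  have hsep := fun x y (hxy : x ≠ y) => exists_mem_iUnion_Fc_apply_ne hφc hφp hxy
  have hnv := exists_mem_iUnion_Fc_apply_ne_zero hφc hφp
  rw [← hS] at hsep hnv ⊢
  exact ⟨fun i f => ⟨f.comp (InvLim.projCocompact hφc hφp i), rfl⟩, Fc_subset_succ hφc hφp,
    zero_mem S, fun g hg h hh => ⟨add_mem hg hh, mul_mem hg hh⟩,
    fun g hg => ⟨star_mem hg, fun c => SMulMemClass.smul_mem c hg⟩, hsep,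
    ZeroAtInftyContinuousMap.dense_of_separatesPoints (A := S) hsep hnv⟩

/-- for an inverse system of locally compact Hausdorff spaces with
continuous proper surjective bonding maps `φᵢ`, and `X` the inverse limit:
(i) for every `f ∈ C₀(Xᵢ)` the function `f ∘ πᵢ` belongs to `C₀(X)`, and
`Fᵢ ⊆ F_{i+1}`; (ii) `⋃ᵢ Fᵢ` is a `*`-subalgebra of `C₀(X)` which separates the
points of `X`; (iii) `⋃ᵢ Fᵢ` is dense in `C₀(X)` for the uniform norm. -/
theorem invLim_C0_dense (X : ℕ → Type*) [∀ i, TopologicalSpace (X i)]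
    [∀ i, LocallyCompactSpace (X i)] [∀ i, T2Space (X i)]
    (φ : ∀ i, X (i + 1) → X i)
    (hφc : ∀ i, Continuous (φ i)) (hφs : ∀ i, Function.Surjective (φ i))
    (hφp : ∀ i (K : Set (X i)), IsCompact K → IsCompact (φ i ⁻¹' K)) :
    (∀ i (f : C₀(X i, ℂ)), ∃ g : C₀(InvLim X φ, ℂ),
      ⇑g = ⇑f ∘ (fun x : InvLim X φ => x.val i)) ∧
    (∀ i, Fc X φ i ⊆ Fc X φ (i + 1)) ∧
    ((0 : C₀(InvLim X φ, ℂ)) ∈ ⋃ i, Fc X φ i) ∧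
    (∀ g ∈ ⋃ i, Fc X φ i, ∀ h ∈ ⋃ i, Fc X φ i,
      g + h ∈ ⋃ i, Fc X φ i ∧ g * h ∈ ⋃ i, Fc X φ i) ∧
    (∀ g ∈ ⋃ i, Fc X φ i, star g ∈ ⋃ i, Fc X φ i ∧ ∀ c : ℂ, c • g ∈ ⋃ i, Fc X φ i) ∧
    (∀ x y : InvLim X φ, x ≠ y → ∃ g ∈ ⋃ i, Fc X φ i, g x ≠ g y) ∧
    Dense (⋃ i, Fc X φ i) :=
  invLim_C0_dense_general X φ hφc hφp
end

section
/- Let m ≥ 1, let X = ℤ/2mℤ with the discrete topology, let ω : X → X be the cyclic shift ω(x) = x + 1, and let D⁰ ⊆ X be the set of residues of even integers and D¹ = X ∖ D⁰ the set of residues of odd integers (these are well defined since the modulus 2m is even). Define a family β indexed by ℤ²: for (p,q) ∈ ℤ², β_{(p,q)} is the map x ↦ x + (p − q) with domain X if p + q = 0, with domain D⁰ if p + q = 1, with domain D¹ if p + q = −1, and β_{(p,q)} is the empty map if |p + q| ≥ 2. Then β is a partial action of the group ℤ² on X; its restriction to the positive cone Σ = {(a,b) : a ≥ 0, b ≥ 0}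 satisfies β_{(0,0)} = id_X, β_{(1,0)} = ω restricted to D⁰, β_{(0,1)} = ω⁻¹ restricted to D⁰, and β_s empty for all other s ∈ Σ. -/
/-- `D⁰ ⊆ ℤ/2mℤ`: the residues of even integers. -/
def Deven (m : ℕ) : Set (ZMod (2 * m)) := {x | ∃ k : ℤ, x = ((2 * k : ℤ) : ZMod (2 * m))}

/-- `D¹ = X ∖ D⁰`: the residues of odd integers. -/
def Dodd (m : ℕ) : Set (ZMod (2 * m)) := (Deven m)ᶜ

/-- Domain/range sets of the family `β` indexed by `ℤ²`: the domain of `β_{(p,q)}` is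
`X` if `p + q = 0`, `D⁰` if `p + q = 1`, `D¹` if `p + q = -1`, and `∅` if `|p+q| ≥ 2`;
here `Dbeta m g` is the domain of `β_{-g}` (equivalently, the range of `β_g`). -/
def Dbeta (m : ℕ) : ℤ × ℤ → Set (ZMod (2 * m)) := fun g =>
  if g.1 + g.2 = 0 then Set.univ
  else if g.1 + g.2 = -1 then Deven m
  else if g.1 + g.2 = 1 then Dodd m
  else ∅

/-- The maps: `β_{(p,q)}` is `x ↦ x + (p - q)`. -/
def actBeta (m : ℕ) : ℤ × ℤ → ZMod (2 * m) → ZMod (2 * m) := fun g x =>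
  x + ((g.1 - g.2 : ℤ) : ZMod (2 * m))

noncomputable def pim (m : ℕ) : ZMod (2*m) →+* ZMod 2 := ZMod.castHom ⟨m, rfl⟩ (ZMod 2)

lemma pim_intCast (m : ℕ) (a : ℤ) : pim m ((a : ℤ) : ZMod (2*m)) = ((a : ℤ) : ZMod 2) :=
  map_intCast _ _

lemma mem_Deven_iff (m : ℕ) (hm : 1 ≤ m) (x : ZMod (2*m)) : x ∈ Deven m ↔ pim m x = 0 := by
  haveI : NeZero (2*m) := ⟨by omega⟩
  constructor
  · rintro ⟨k, rfl⟩
    rw [pim_intCast]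
    push_cast
    have h2 : ((2:ZMod 2)) = 0 := by decide
    rw [h2]; ring
  · intro h
    have hx : pim m x = ((x.val : ℕ) : ZMod 2) := by
      simp [pim, ZMod.castHom_apply, ZMod.natCast_val]
    rw [hx] at h
    have hdvd : (2:ℕ) ∣ x.val := by
      rwa [ZMod.natCast_eq_zero_iff] at h
    obtain ⟨j, hj⟩ := hdvd
    refine ⟨j, ?_⟩
    have hxv : x = ((x.val : ℕ) : ZMod (2*m)) := by rw [ZMod.natCast_val, ZMod.cast_id]
    rw [hxv, hj]
    push_cast
    ring

lemma mem_add (m : ℕ) (hm : 1 ≤ m) (x : ZMod (2*m)) (c : ℤ) :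
    x + (c : ZMod (2*m)) ∈ Deven m ↔ (Even c ↔ x ∈ Deven m) := by
  haveI : NeZero (2*m) := ⟨by omega⟩
  rw [mem_Deven_iff m hm, mem_Deven_iff m hm, map_add, pim_intCast]
  rcases Int.even_or_odd c with he | ho
  · have hc : ((c : ℤ) : ZMod 2) = 0 := by
      rw [ZMod.intCast_zmod_eq_zero_iff_dvd]
      obtain ⟨k, hk⟩ := he; exact ⟨k, by omega⟩
    rw [hc]; simp [he]
  · obtain ⟨k, hk⟩ := ho
    have hodd : ¬ Even c := by simp [Int.even_iff]; omega
    have hc : ((c : ℤ) : ZMod 2) = 1 := by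
      rw [hk]; push_cast
      have h2 : ((2:ZMod 2)) = 0 := by decide
      rw [h2]; ring
    rw [hc]
    simp [hodd]
    have key : ∀ a : ZMod 2, a + 1 = 0 ↔ ¬ a = 0 := by decide
    exact key _

open Classical in
noncomputable def eps (m : ℕ) (x : ZMod (2*m)) : ℤ := if x ∈ Deven m then 0 else 1

lemma eps01 (m : ℕ) (x : ZMod (2*m)) : eps m x = 0 ∨ eps m x = 1 := by
  unfold eps; split_ifs <;> simp

lemma mem_iff_eps (m : ℕ) (x : ZMod (2*m)) : x ∈ Deven m ↔ eps m x = 0 := by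
  unfold eps; split_ifs with h <;> simp [h]

lemma eps_act (m : ℕ) (hm : 1 ≤ m) (g : ℤ × ℤ) (x : ZMod (2*m)) :
    eps m (actBeta m g x) = (g.1 + g.2 + eps m x) % 2 := by
  have h := mem_add m hm x (g.1 - g.2)
  rw [mem_iff_eps, mem_iff_eps, Int.even_iff] at h
  show eps m (x + _) = _
  rcases eps01 m x with h0 | h0 <;> rcases eps01 m (x + ((g.1 - g.2 : ℤ) : ZMod (2*m))) with h1 | h1 <;>
    rw [h0, h1] <;> rw [h0, h1] at h <;> omega

lemma mem_Dbeta_iff (m : ℕ) (g : ℤ × ℤ) (x : ZMod (2*m)) :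
    x ∈ Dbeta m g ↔ (g.1 + g.2 = 0 ∨ (g.1 + g.2 = -1 ∧ eps m x = 0) ∨
      (g.1 + g.2 = 1 ∧ eps m x = 1)) := by
  unfold Dbeta
  have h := mem_iff_eps m x
  rcases eps01 m x with h0 | h0 <;>
    split_ifs with h1 h2 h3 <;>
    simp_all [Dodd]

lemma mem_Dbeta_act (m : ℕ) (hm : 1 ≤ m) (g h : ℤ × ℤ) (x : ZMod (2*m)) :
    actBeta m g x ∈ Dbeta m h ↔ (h.1 + h.2 = 0 ∨
      (h.1 + h.2 = -1 ∧ (g.1 + g.2 + eps m x) % 2 = 0) ∨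
      (h.1 + h.2 = 1 ∧ (g.1 + g.2 + eps m x) % 2 = 1)) := by
  rw [mem_Dbeta_iff, eps_act m hm]

/-- for `m ≥ 1` and `X = ℤ/2mℤ` with the cyclic shift `ω(x) = x + 1`,
the family `β` above is a partial action of the group `ℤ²` on `X`; its restriction to
the positive cone `Σ = {(a,b) : a ≥ 0, b ≥ 0}` satisfies `β_{(0,0)} = id_X`,
`β_{(1,0)} = ω` restricted to `D⁰`, `β_{(0,1)} = ω⁻¹` restricted to `D⁰`, and `β_s`
is empty for all other `s ∈ Σ`. -/
theorem zmod_partialAction (m : ℕ) (hm : 1 ≤ m) :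
    ∃ F : SigmaFamily (ℤ × ℤ) (Set.univ : Set (ℤ × ℤ)) (ZMod (2 * m)),
      F.D = Dbeta m ∧ F.act = actBeta m ∧ F.Cond1' ∧ F.Cond2 ∧
      (∀ x, F.act (0, 0) x = x) ∧ F.D (0, 0) = Set.univ ∧
      F.D (-((1 : ℤ), (0 : ℤ))) = Deven m ∧
      (∀ x ∈ Deven m, F.act (1, 0) x = x + 1) ∧
      F.D (-((0 : ℤ), (1 : ℤ))) = Deven m ∧
      (∀ x ∈ Deven m, F.act (0, 1) x + 1 = x) ∧
      (∀ s : ℤ × ℤ, 0 ≤ s.1 → 0 ≤ s.2 → s ≠ (0, 0) → s ≠ (1, 0) → s ≠ (0, 1) →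
        F.D (-s) = ∅) := by
  classical
  refine ⟨⟨Dbeta m, actBeta m, ?_, ?_, ?_, ?_, ?_⟩, rfl, rfl, ?_, ?_, ?_, ?_, ?_, ?_, ?_, ?_, ?_⟩
  · -- mapsTo
    intro t _ x hx
    rw [mem_Dbeta_iff] at hx
    rw [mem_Dbeta_act m hm]
    simp only [Prod.fst_neg, Prod.snd_neg] at hx
    omega
  · -- injOn
    intro t _ x _ y _ h
    exact add_right_cancel h
  · -- surjOn
    intro t _ y hy
    refine ⟨actBeta m (-t) y, ?_, ?_⟩
    · rw [mem_Dbeta_act m hm]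
      rw [mem_Dbeta_iff] at hy
      simp only [Prod.fst_neg, Prod.snd_neg]
      omega
    · show actBeta m t (actBeta m (-t) y) = y
      unfold actBeta
      simp only [Prod.fst_neg, Prod.snd_neg]
      push_cast
      ring
  · -- D_zero
    simp [Dbeta]
  · -- act_zero
    intro x
    simp [actBeta]
  · -- Cond1'
    intro s _ t _ y hy
    obtain ⟨x, ⟨hx1, hx2⟩, rfl⟩ := hy
    rw [mem_Dbeta_act m hm]
    rw [mem_Dbeta_iff] at hx1 hx2
    simp only [Prod.fst_neg, Prod.snd_neg, Prod.fst_add, Prod.snd_add] at *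
    omega
  · -- Cond2
    intro s _ t _ x hx
    obtain ⟨hx1, hx2⟩ := hx
    constructor
    · rw [mem_Dbeta_act m hm]
      rw [mem_Dbeta_iff] at hx1 hx2
      simp only [Prod.fst_neg, Prod.snd_neg, Prod.fst_add, Prod.snd_add] at *
      omega
    · show actBeta m (s + t) x = actBeta m s (actBeta m t x)
      unfold actBeta
      simp only [Prod.fst_add, Prod.snd_add]
      push_cast
      ring
  · intro x; simp [actBeta]
  · simp [Dbeta]
  · norm_num [Dbeta]
  · intro x _; norm_num [actBeta]
  · norm_num [Dbeta]
  · intro x _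
    show x + ((0 - 1 : ℤ) : ZMod (2*m)) + 1 = x
    push_cast
    ring
  · intro s h1 h2 h3 h4 h5
    simp only [ne_eq, Prod.ext_iff] at h3 h4 h5
    have hsum : 2 ≤ s.1 + s.2 := by omega
    show Dbeta m (-s) = ∅
    unfold Dbeta
    simp only [Prod.fst_neg, Prod.snd_neg]
    rw [if_neg (by omega), if_neg (by omega), if_neg (by omega)]
end
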